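/- arXiv:2204.06851 — 12 statements merged into one kernel-verified Lean document; each statement's English description precedes it below -/
import Mathlib

section
/- Let c = (4 - 2√3)/3. The function p : ℝ → ℝ defined by p(y) = 1 - exp(-(y + (1/2)·y² + c·y³)) is concave on the interval [0, ∞). -/
/-!
Write `p = 1 - exp (-g)` with `g y = y + y²/2 + c y³`. Then `p'' = (g'' - g'²) e^{-g}`, and since
`0 ≤ c ≤ 1/3`, for `y ≥ 0` we have `g'' = 1 + 6cy ≤ 1 + 2y ≤ (1 + y)² ≤ g'²`.
-/

open Real

theorem concaveOn_one_sub_exp_neg {D : Set ℝ} (hD : Convex ℝ D) {g g' g'' : ℝ → ℝ}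
    (hg : ContinuousOn g D) (hg' : ∀ x ∈ interior D, HasDerivAt g (g' x) x)
    (hg'' : ∀ x ∈ interior D, HasDerivAt g' (g'' x) x)
    (hle : ∀ x ∈ interior D, g'' x ≤ g' x ^ 2) :
    ConcaveOn ℝ D (fun x => 1 - exp (-g x)) := by
  refine concaveOn_of_hasDerivWithinAt2_nonpos hD (continuousOn_const.sub hg.neg.rexp)
    (f' := fun x => g' x * exp (-g x)) (f'' := fun x => (g'' x - g' x ^ 2) * exp (-g x))
    (fun x hx => ?_) (fun x hx => ?_) (fun x hx => ?_)
  · exact (((hg' x hx).fun_neg.exp.const_sub 1).congr_deriv (by ring)).hasDerivWithinAt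
  · exact (((hg'' x hx).fun_mul (hg' x hx).fun_neg.exp).congr_deriv (by ring)).hasDerivWithinAt
  · exact mul_nonpos_of_nonpos_of_nonneg (sub_nonpos.2 (hle x hx)) (exp_pos _).le

theorem hasDerivAt_cubic_ocs (c y : ℝ) :
    HasDerivAt (fun y : ℝ => y + (1/2) * y^2 + c * y^3) (1 + y + 3 * c * y^2) y := by
  refine (((hasDerivAt_id' y).fun_add ((hasDerivAt_pow 2 y).const_mul (1/2))).fun_add
    ((hasDerivAt_pow 3 y).const_mul c)).congr_deriv ?_
  push_cast
  ring

theorem hasDerivAt_quadratic_ocs (c y : ℝ) :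
    HasDerivAt (fun y : ℝ => 1 + y + 3 * c * y^2) (1 + 6 * c * y) y := by
  refine (((hasDerivAt_id' y).const_add 1).fun_add
    ((hasDerivAt_pow 2 y).const_mul (3 * c))).congr_deriv ?_
  push_cast
  ring

theorem one_add_six_mul_le_sq {c y : ℝ} (hc₀ : 0 ≤ c) (hc : c ≤ 1/3) (hy : 0 ≤ y) :
    1 + 6 * c * y ≤ (1 + y + 3 * c * y^2) ^ 2 :=
  calc 1 + 6 * c * y ≤ 1 + 2 * y := by nlinarith
    _ ≤ (1 + y) ^ 2 := by nlinarith
    _ ≤ (1 + y + 3 * c * y^2) ^ 2 := by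
      gcongr ?_ ^ 2
      exact le_add_of_nonneg_right (by positivity)

theorem ocs_coeff_mem_Icc : (4 - 2 * √3) / 3 ∈ Set.Icc 0 (1/3) := by
  have h3 : √3 ^ 2 = 3 := sq_sqrt (by norm_num)
  have hlo : 3 / 2 ≤ √3 := by nlinarith [sqrt_nonneg 3]
  have hhi : √3 ≤ 2 := by nlinarith [sqrt_nonneg 3]
  constructor <;> linarith

/-- The OCS selection-probability guarantee
`p(y) = 1 - exp(-(y + (1/2)·y² + ((4 - 2√3)/3)·y³))` is concave on `[0, ∞)`. -/
theorem ocs_p_concave :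
    ConcaveOn ℝ (Set.Ici (0 : ℝ))
      (fun y : ℝ => 1 - Real.exp (-(y + (1/2) * y^2 + ((4 - 2 * Real.sqrt 3) / 3) * y^3))) := by
  obtain ⟨hc₀, hc⟩ := ocs_coeff_mem_Icc
  refine concaveOn_one_sub_exp_neg (convex_Ici 0) (by fun_prop)
    (fun y _ => hasDerivAt_cubic_ocs _ y) (fun y _ => hasDerivAt_quadratic_ocs _ y) ?_
  rw [interior_Ici]
  exact fun y hy => one_add_six_mul_le_sq hc₀ hc hy.le
end

section
/- Let y be a nonnegative square-integrable real random variable with E[y] = μ where 0 ≤ μ ≤ 1, and suppose E[y²] ≤ μ + (1/2)·μ². Then E[min(y, 1)] ≥ 0.646·μ. -/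
/-!
Truncation at `1` costs at most a quadratic: for `β < 1`,
`min t 1 ≥ t - (t - β)² / (4 (1 - β))`, the right side being the parabola through `(β, β)`
tangent to the line `t ↦ 1`. Taking expectations turns the second-moment bound into
`E[min(y, 1)] ≥ μ - (E[y²] - 2βμ + β²) / (4 (1 - β))`, and `β = 0.3 μ` gives `0.646 μ`.
-/

open MeasureTheory

theorem sub_sq_div_le_min (t c β : ℝ) (hβ : β < c) :
    t - (t - β) ^ 2 / (4 * (c - β)) ≤ min t c := by
  have hpos : 0 < 4 * (c - β) := by linarith
  rcases le_total t c with htc | hct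
  · rw [min_eq_left htc]
    have : 0 ≤ (t - β) ^ 2 / (4 * (c - β)) := by positivity
    linarith
  · rw [min_eq_right hct, sub_le_comm, le_div_iff₀ hpos]
    nlinarith [sq_nonneg (t - β - 2 * (c - β))]

section Integrals

variable {Ω : Type*} [MeasurableSpace Ω] {P : Measure Ω} [IsProbabilityMeasure P] {y : Ω → ℝ}

theorem integrable_sub_const_sq (hy : MemLp y 2 P) (b : ℝ) :
    Integrable (fun ω => (y ω - b) ^ 2) P :=
  (hy.sub (memLp_const b)).integrable_sq

theorem integral_sub_const_sq (hy : MemLp y 2 P) (b : ℝ) :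
    ∫ ω, (y ω - b) ^ 2 ∂P = ∫ ω, y ω ^ 2 ∂P - 2 * b * ∫ ω, y ω ∂P + b ^ 2 := by
  have hy1 : Integrable y P := hy.integrable one_le_two
  have hlin : Integrable (fun ω => y ω ^ 2 - 2 * b * y ω) P :=
    hy.integrable_sq.sub (hy1.const_mul _)
  calc ∫ ω, (y ω - b) ^ 2 ∂P = ∫ ω, (y ω ^ 2 - 2 * b * y ω + b ^ 2) ∂P := by
        congr 1; funext ω; ring
    _ = ∫ ω, y ω ^ 2 ∂P - 2 * b * ∫ ω, y ω ∂P + b ^ 2 := by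
        rw [integral_add hlin (integrable_const _), integral_sub hy.integrable_sq (hy1.const_mul _),
          integral_const_mul, integral_const, probReal_univ, one_smul]

theorem integral_sub_sq_div_le_integral_min (hy : MemLp y 2 P) {c β : ℝ} (hβ : β < c) :
    ∫ ω, y ω ∂P - (∫ ω, y ω ^ 2 ∂P - 2 * β * ∫ ω, y ω ∂P + β ^ 2) / (4 * (c - β)) ≤
      ∫ ω, min (y ω) c ∂P := by
  have hy1 : Integrable y P := hy.integrable one_le_two
  have hquad := (integrable_sub_const_sq hy β).div_const (4 * (c - β))
  rw [← integral_sub_const_sq hy, ← integral_div, ← integral_sub hy1 hquad]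
  exact integral_mono (hy1.sub hquad) (hy1.inf (integrable_const c))
    fun ω => sub_sq_div_le_min (y ω) c β hβ

end Integrals

theorem second_moment_to_ratio_a_general
    {Ω : Type*} [MeasurableSpace Ω] (P : Measure Ω) [IsProbabilityMeasure P]
    (y : Ω → ℝ) (μ : ℝ)
    (hy : MemLp y 2 P)
    (hmean : ∫ ω, y ω ∂P = μ) (hμ0 : 0 ≤ μ) (hμ1 : μ ≤ 1)
    (hsq : ∫ ω, (y ω) ^ 2 ∂P ≤ μ + (1/2) * μ ^ 2) :
    0.646 * μ ≤ ∫ ω, min (y ω) 1 ∂P := by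
  have hβ : 0.3 * μ < 1 := by linarith
  have hbound := integral_sub_sq_div_le_integral_min hy hβ
  rw [hmean] at hbound
  have hD : 0 < 4 * (1 - 0.3 * μ) := by linarith
  have hpenalty : (∫ ω, y ω ^ 2 ∂P - 2 * (0.3 * μ) * μ + (0.3 * μ) ^ 2) / (4 * (1 - 0.3 * μ)) ≤
      0.354 * μ := by
    rw [div_le_iff₀ hD]
    nlinarith
  linarith

/-- Lemma 3.1(a): if `y ≥ 0` is square-integrable with `E[y] = μ ∈ [0,1]` and
`E[y²] ≤ μ + μ²/2`, then `E[min(y,1)] ≥ 0.646·μ`. -/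
theorem second_moment_to_ratio_a
    {Ω : Type*} [MeasurableSpace Ω] (P : Measure Ω) [IsProbabilityMeasure P]
    (y : Ω → ℝ) (μ : ℝ)
    (hy : MemLp y 2 P) (hpos : ∀ ω, 0 ≤ y ω)
    (hmean : ∫ ω, y ω ∂P = μ) (hμ0 : 0 ≤ μ) (hμ1 : μ ≤ 1)
    (hsq : ∫ ω, (y ω) ^ 2 ∂P ≤ μ + (1/2) * μ ^ 2) :
    0.646 * μ ≤ ∫ ω, min (y ω) 1 ∂P :=
  second_moment_to_ratio_a_general P y μ hy hmean hμ0 hμ1 hsq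
end

section
/- Let y be a nonnegative square-integrable real random variable with E[y] = μ where 0 ≤ μ ≤ 1, and suppose E[y²] ≤ 1.05771·μ + 0.231·μ². Then E[p(y)] ≥ 0.704·μ, where p(y) := 1 - exp(-(y + (1/2)·y² + ((4 - 2√3)/3)·y³)). -/
/-!
A quadratic `a + b t - c t²` (`c ≥ 0`) below `p` on `[0, ∞)` gives
`E[p(y)] ≥ a + b μ - c E[y²] ≥ a + b μ - c (1.05771 μ + 0.231 μ²)`. Two quadratics suffice: for
`μ ≤ 2/5` the one tangent to `p` at `0`, for `μ ≥ 2/5` a rounding of the optimal one for `μ = 1`,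
which nearly touches `p` at `t ≈ 0.38` and `t ≈ 1.45`; at `μ = 1` this leaves less than `10⁻⁴`
to spare.

With `(4 - 2√3)/3` replaced by `893/5000` in the exponent `g`, each bound `exp (-g t) ≤ q t` is
checked on a few intervals. On each, `exp (g t) ≥ T₂₀(a) · T₄(g t - a)` for a rational anchor
`a`, where `T_n` is the Taylor polynomial of `exp` with `n` terms and `T₄`, of odd degree, is a
lower bound on all of `ℝ`. The remaining polynomial inequality of degree 11 has nonnegative
Bernstein coefficients on the interval, so `linarith` derives it from the Bernstein basis.
-/

open MeasureTheory Real Finset Set Nat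

theorem cubic_le_exp (x : ℝ) : 1 + x + x ^ 2 / 2 + x ^ 3 / 6 ≤ exp x := by
  set F : ℝ → ℝ := fun s ↦ (1 + s + s ^ 2 / 2 + s ^ 3 / 6) * exp (-s)
  have hF (s : ℝ) : HasDerivAt F (-(s ^ 3 / 6 * exp (-s))) s := by
    have hp : HasDerivAt (fun s : ℝ ↦ 1 + s + s ^ 2 / 2 + s ^ 3 / 6) (1 + s + s ^ 2 / 2) s :=
      ((((hasDerivAt_id s).const_add 1).add ((hasDerivAt_pow 2 s).div_const 2)).add
        ((hasDerivAt_pow 3 s).div_const 6)).congr_deriv (by norm_num; ring)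
    exact (hp.mul (hasDerivAt_neg s).exp).congr_deriv (by ring)
  have hcont : Continuous F := by fun_prop
  have hle : F x ≤ F 0 := by
    rcases le_total x 0 with hx | hx
    · refine monotoneOn_of_hasDerivWithinAt_nonneg (convex_Iic 0) hcont.continuousOn
        (fun s _ ↦ (hF s).hasDerivWithinAt) (fun s hs ↦ ?_) hx self_mem_Iic hx
      rw [interior_Iic] at hs
      have hs3 : s ^ 3 ≤ 0 := Odd.pow_nonpos (by decide) hs.out.le
      nlinarith [exp_pos (-s)]
    · refine antitoneOn_of_hasDerivWithinAt_nonpos (convex_Ici 0) hcont.continuousOn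
        (fun s _ ↦ (hF s).hasDerivWithinAt) (fun s hs ↦ ?_) self_mem_Ici hx hx
      rw [interior_Ici] at hs
      have hs3 : 0 ≤ s ^ 3 := pow_nonneg hs.out.le 3
      nlinarith [exp_pos (-s)]
  have hinv : exp (-x) * exp x = 1 := by rw [← exp_add]; simp
  simp only [F, neg_zero, exp_zero] at hle
  nlinarith [exp_pos x]

theorem exp_neg_le_of_one_le_mul_taylor {a x y : ℝ} (ha : 0 ≤ a) (hy : 0 < y) (N : ℕ)
    (h : 1 ≤ y * ((∑ i ∈ range N, a ^ i / i !) *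
      (1 + (x - a) + (x - a) ^ 2 / 2 + (x - a) ^ 3 / 6))) :
    exp (-x) ≤ y := by
  have hK : 0 ≤ ∑ i ∈ range N, a ^ i / i ! := sum_nonneg fun i _ ↦ by positivity
  have hexp : (∑ i ∈ range N, a ^ i / i !) * (1 + (x - a) + (x - a) ^ 2 / 2 + (x - a) ^ 3 / 6)
      ≤ exp x := calc
    _ ≤ (∑ i ∈ range N, a ^ i / i !) * exp (x - a) :=
      mul_le_mul_of_nonneg_left (cubic_le_exp _) hK
    _ ≤ exp a * exp (x - a) :=
      mul_le_mul_of_nonneg_right (sum_le_exp_of_nonneg ha N) (exp_pos _).le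
    _ = exp x := by rw [← exp_add, add_sub_cancel]
  rw [exp_neg, inv_le_iff_one_le_mul₀ (exp_pos x)]
  exact h.trans (mul_le_mul_of_nonneg_left hexp hy.le)

theorem bernstein_basis_eleven_nonneg {l r t : ℝ} (ht : t ∈ Icc l r) :
    0 ≤ (r - t) ^ 11 ∧ 0 ≤ (t - l) * (r - t) ^ 10 ∧ 0 ≤ (t - l) ^ 2 * (r - t) ^ 9 ∧
    0 ≤ (t - l) ^ 3 * (r - t) ^ 8 ∧ 0 ≤ (t - l) ^ 4 * (r - t) ^ 7 ∧
    0 ≤ (t - l) ^ 5 * (r - t) ^ 6 ∧ 0 ≤ (t - l) ^ 6 * (r - t) ^ 5 ∧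
    0 ≤ (t - l) ^ 7 * (r - t) ^ 4 ∧ 0 ≤ (t - l) ^ 8 * (r - t) ^ 3 ∧
    0 ≤ (t - l) ^ 9 * (r - t) ^ 2 ∧ 0 ≤ (t - l) ^ 10 * (r - t) ∧ 0 ≤ (t - l) ^ 11 := by
  have hl : 0 ≤ t - l := sub_nonneg.2 ht.1
  have hr : 0 ≤ r - t := sub_nonneg.2 ht.2
  refine ⟨?_, ?_, ?_, ?_, ?_, ?_, ?_, ?_, ?_, ?_, ?_, ?_⟩ <;> positivity

theorem exp_neg_cubic_le_tangent_quadratic {t : ℝ} (ht : 0 ≤ t) :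
    exp (-(t + t ^ 2 / 2 + 893 / 5000 * t ^ 3)) ≤ 1 - t + 51 / 200 * t ^ 2 := by
  have hq : 0 < 1 - t + 51 / 200 * t ^ 2 := by nlinarith [sq_nonneg (t - 100 / 51)]
  rcases le_or_gt t 1 with h₁ | h₁
  · refine exp_neg_le_of_one_le_mul_taylor (a := 0) le_rfl hq 20 ?_
    norm_num [sum_range_succ]
    linarith [bernstein_basis_eleven_nonneg ⟨ht, h₁⟩]
  rcases le_or_gt t 2 with h₂ | h₂
  · refine exp_neg_le_of_one_le_mul_taylor (a := 2) (by norm_num) hq 20 ?_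
    norm_num [sum_range_succ]
    linarith [bernstein_basis_eleven_nonneg ⟨h₁.le, h₂⟩]
  refine (exp_le_exp.2 (by nlinarith : -(t + t ^ 2 / 2 + 893 / 5000 * t ^ 3) ≤ -5)).trans
    (exp_neg_le_of_one_le_mul_taylor (a := 5) (by norm_num) hq 20 ?_)
  norm_num [sum_range_succ]
  nlinarith [sq_nonneg (t - 100 / 51)]

theorem exp_neg_cubic_le_bitangent_quadratic {t : ℝ} (ht : 0 ≤ t) :
    exp (-(t + t ^ 2 / 2 + 893 / 5000 * t ^ 3)) ≤
      20597 / 20000 - 11849 / 10000 * t + 7 / 20 * t ^ 2 := by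
  have hq : 0 < 20597 / 20000 - 11849 / 10000 * t + 7 / 20 * t ^ 2 := by
    nlinarith [sq_nonneg (t - 11849 / 7000)]
  rcases le_or_gt t (7 / 20) with h₁ | h₁
  · refine exp_neg_le_of_one_le_mul_taylor (a := 1 / 4) (by norm_num) hq 20 ?_
    norm_num [sum_range_succ]
    linarith [bernstein_basis_eleven_nonneg ⟨ht, h₁⟩]
  rcases le_or_gt t (13 / 20) with h₂ | h₂
  · refine exp_neg_le_of_one_le_mul_taylor (a := 1 / 2) (by norm_num) hq 20 ?_
    norm_num [sum_range_succ]
    linarith [bernstein_basis_eleven_nonneg ⟨h₁.le, h₂⟩]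
  rcases le_or_gt t (13 / 10) with h₃ | h₃
  · refine exp_neg_le_of_one_le_mul_taylor (a := 3 / 2) (by norm_num) hq 20 ?_
    norm_num [sum_range_succ]
    linarith [bernstein_basis_eleven_nonneg ⟨h₂.le, h₃⟩]
  rcases le_or_gt t (29 / 20) with h₄ | h₄
  · refine exp_neg_le_of_one_le_mul_taylor (a := 3) (by norm_num) hq 20 ?_
    norm_num [sum_range_succ]
    linarith [bernstein_basis_eleven_nonneg ⟨h₃.le, h₄⟩]
  rcases le_or_gt t 2 with h₅ | h₅
  · refine exp_neg_le_of_one_le_mul_taylor (a := 3) (by norm_num) hq 20 ?_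
    norm_num [sum_range_succ]
    linarith [bernstein_basis_eleven_nonneg ⟨h₄.le, h₅⟩]
  refine (exp_le_exp.2 (by nlinarith : -(t + t ^ 2 / 2 + 893 / 5000 * t ^ 3) ≤ -5)).trans
    (exp_neg_le_of_one_le_mul_taylor (a := 5) (by norm_num) hq 20 ?_)
  norm_num [sum_range_succ]
  nlinarith [sq_nonneg (t - 11849 / 7000)]

theorem exp_neg_cubic_le_of_le {κ κ' t : ℝ} (ht : 0 ≤ t) (hκ : κ ≤ κ') :
    exp (-(t + (1 / 2) * t ^ 2 + κ' * t ^ 3)) ≤ exp (-(t + t ^ 2 / 2 + κ * t ^ 3)) := by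
  gcongr
  nlinarith [mul_le_mul_of_nonneg_right hκ (pow_nonneg ht 3)]

theorem le_four_sub_two_mul_sqrt_three_div_three : (893 / 5000 : ℝ) ≤ (4 - 2 * √3) / 3 := by
  have : √3 ≤ 17321 / 10000 := (Real.sqrt_le_left (by norm_num)).2 (by norm_num)
  linarith

theorem le_integral_of_quadratic_le {Ω : Type*} [MeasurableSpace Ω] {P : Measure Ω}
    [IsProbabilityMeasure P] {y f : Ω → ℝ} (hy : MemLp y 2 P) (hf : Integrable f P)
    {a b c : ℝ} (h : ∀ ω, a + b * y ω - c * y ω ^ 2 ≤ f ω) :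
    a + b * ∫ ω, y ω ∂P - c * ∫ ω, y ω ^ 2 ∂P ≤ ∫ ω, f ω ∂P := by
  have hy₁ : Integrable (fun ω ↦ b * y ω) P := (hy.integrable one_le_two).const_mul b
  have hy₂ : Integrable (fun ω ↦ c * y ω ^ 2) P := hy.integrable_sq.const_mul c
  have hlin : Integrable (fun ω ↦ a + b * y ω) P := (integrable_const a).add hy₁
  calc a + b * ∫ ω, y ω ∂P - c * ∫ ω, y ω ^ 2 ∂P
      = ∫ ω, a + b * y ω - c * y ω ^ 2 ∂P := by
        rw [integral_sub hlin hy₂, integral_add (integrable_const a) hy₁, integral_const,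
          probReal_univ, one_smul, integral_const_mul, integral_const_mul]
    _ ≤ ∫ ω, f ω ∂P := integral_mono (hlin.sub hy₂) hf h

theorem integrable_one_sub_exp_neg {Ω : Type*} [MeasurableSpace Ω] {P : Measure Ω}
    [IsFiniteMeasure P] {h : Ω → ℝ} (hh : AEStronglyMeasurable h P)
    (hh₀ : ∀ ω, 0 ≤ h ω) :
    Integrable (fun ω ↦ 1 - exp (-h ω)) P := by
  refine (integrable_const 1).mono' (by fun_prop) (ae_of_all _ fun ω ↦ ?_)
  have := exp_pos (-h ω)
  have : exp (-h ω) ≤ 1 := exp_le_one_iff.2 (neg_nonpos.2 (hh₀ ω))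
  rw [norm_eq_abs, abs_le]
  constructor <;> linarith

/-- Lemma 3.1(d): if `y ≥ 0` is square-integrable with `E[y] = μ ∈ [0,1]` and
`E[y²] ≤ 1.05771·μ + 0.231·μ²`, then `E[p(y)] ≥ 0.704·μ`, where
`p(y) = 1 - exp(-(y + y²/2 + ((4-2√3)/3)·y³))`. -/
theorem second_moment_to_ratio_d
    {Ω : Type*} [MeasurableSpace Ω] (P : Measure Ω) [IsProbabilityMeasure P]
    (y : Ω → ℝ) (μ : ℝ)
    (hy : MemLp y 2 P) (hpos : ∀ ω, 0 ≤ y ω)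
    (hmean : ∫ ω, y ω ∂P = μ) (hμ0 : 0 ≤ μ) (hμ1 : μ ≤ 1)
    (hsq : ∫ ω, (y ω) ^ 2 ∂P ≤ 1.05771 * μ + 0.231 * μ ^ 2) :
    0.704 * μ ≤ ∫ ω,
      (1 - Real.exp (-(y ω + (1/2) * (y ω) ^ 2 + ((4 - 2 * Real.sqrt 3) / 3) * (y ω) ^ 3))) ∂P := by
  have hκ := le_four_sub_two_mul_sqrt_three_div_three
  have hκ₀ : 0 ≤ (4 - 2 * √3) / 3 := le_trans (by norm_num) hκ
  have hexp (ω : Ω) := exp_neg_cubic_le_of_le (hpos ω) hκ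
  have hint := integrable_one_sub_exp_neg (P := P)
    (h := fun ω ↦ y ω + (1/2) * (y ω) ^ 2 + ((4 - 2 * √3) / 3) * (y ω) ^ 3)
    (by have := hy.1; fun_prop) fun ω ↦ by have := hpos ω; positivity
  rcases le_or_gt μ (2 / 5) with hμ | hμ
  · have := le_integral_of_quadratic_le hy hint (a := 0) (b := 1) (c := 51 / 200) fun ω ↦ by
      linarith [hexp ω, exp_neg_cubic_le_tangent_quadratic (hpos ω)]
    rw [hmean] at this
    nlinarith [mul_nonneg hμ0 (sub_nonneg.2 hμ)]
  · have := le_integral_of_quadratic_le hy hint (a := -597 / 20000) (b := 11849 / 10000)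
      (c := 7 / 20) fun ω ↦ by linarith [hexp ω, exp_neg_cubic_le_bitangent_quadratic (hpos ω)]
    rw [hmean] at this
    nlinarith [mul_nonneg (sub_nonneg.2 hμ.le) (sub_nonneg.2 hμ1)]
end

section
/- Let (Ω, F, P) be a probability space with a filtration F_1 ⊆ F_2 ⊆ … ⊆ F_n, and for each j ∈ {1, …, n} let x_j : Ω → [0, 1] be F_j-measurable. Suppose that for every j ∈ {1, …, n}, almost surely x_j + E[Σ_{k > j} x_k | F_j] ≤ 1. Let ỹ = Σ_{j=1}^n x_j and μ = E[ỹ]. Then E[ỹ²] ≤ 2·μ − Σ_{j=1}^n E[x_j²]. -/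
/-!
Expanding the square, `E[ỹ²] = Σ_j E[x_j²] + 2 Σ_j E[x_j S_j]` with `S_j = Σ_{k>j} x_k`. As `x_j` is
`F_j`-measurable and bounded, `E[x_j S_j] = E[x_j E[S_j | F_j]]`, and `x_j ≥ 0` together with
`E[S_j | F_j] ≤ 1 - x_j` bounds this by `E[x_j] - E[x_j²]`; summing over `j` gives the claim.
-/

open MeasureTheory Finset

theorem sq_sum_eq_sum_sq_add_two_mul_sum_lt {ι R : Type*} [Fintype ι] [LinearOrder ι]
    [CommSemiring R] (a : ι → R) :
    (∑ i, a i) ^ 2 = ∑ i, a i ^ 2 + 2 * ∑ i, a i * ∑ j ∈ univ.filter (fun j => i < j), a j := by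
  have h_split (i : ι) : ∑ j, a i * a j = a i ^ 2 + ∑ j ∈ univ.filter (fun j => j < i), a i * a j
      + a i * ∑ j ∈ univ.filter (fun j => i < j), a j := by
    have h_le : univ.filter (fun j => ¬ i < j) = insert i (univ.filter (fun j => j < i)) := by
      ext j
      simp only [mem_filter, mem_univ, true_and, mem_insert, not_lt]
      exact le_iff_eq_or_lt
    rw [← sum_filter_not_add_sum_filter univ (fun j => i < j), h_le, sum_insert (by simp),
      mul_sum]
    ring
  have h_swap : ∑ i, ∑ j ∈ univ.filter (fun j => j < i), a i * a j
      = ∑ i, a i * ∑ j ∈ univ.filter (fun j => i < j), a j := by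
    rw [sum_comm' (t' := univ) (s' := fun j => univ.filter (fun i => j < i)) (by simp)]
    simp only [mul_sum, mul_comm]
  rw [sq, sum_mul_sum, sum_congr rfl fun i _ => h_split i, sum_add_distrib, sum_add_distrib,
    h_swap]
  ring

section

variable {Ω : Type*} {m m0 : MeasurableSpace Ω} {P : Measure Ω} [IsFiniteMeasure P]

theorem integral_mul_condExp_of_bound (hm : m ≤ m0) {x S : Ω → ℝ} (hx : StronglyMeasurable[m] x)
    {C : ℝ} (hx_bdd : ∀ᵐ ω ∂P, ‖x ω‖ ≤ C) (hS : Integrable S P) :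
    ∫ ω, x ω * S ω ∂P = ∫ ω, x ω * P[S | m] ω ∂P := by
  rw [← integral_condExp hm]
  exact integral_congr_ae (condExp_stronglyMeasurable_mul_of_bound hm hx hS C hx_bdd)

theorem integral_mul_le_integral_sub_integral_sq (hm : m ≤ m0) {x S : Ω → ℝ}
    (hx : StronglyMeasurable[m] x) (hx_nonneg : 0 ≤ᵐ[P] x) {C : ℝ}
    (hx_bdd : ∀ᵐ ω ∂P, ‖x ω‖ ≤ C) (hS : Integrable S P)
    (hcond : ∀ᵐ ω ∂P, x ω + P[S | m] ω ≤ 1) :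
    ∫ ω, x ω * S ω ∂P ≤ ∫ ω, x ω ∂P - ∫ ω, x ω ^ 2 ∂P := by
  have hx_meas : AEStronglyMeasurable x P := (hx.mono hm).aestronglyMeasurable
  have hx_int : Integrable x P := .of_bound hx_meas C hx_bdd
  have hx_sq_int : Integrable (fun ω => x ω ^ 2) P := by
    simpa only [sq] using hx_int.bdd_mul hx_meas hx_bdd
  rw [integral_mul_condExp_of_bound hm hx hx_bdd hS, ← integral_sub hx_int hx_sq_int]
  refine integral_mono_ae (integrable_condExp.bdd_mul hx_meas hx_bdd)
    (hx_int.sub hx_sq_int) ?_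
  filter_upwards [hx_nonneg, hcond] with ω hω_nonneg hω
  have := mul_le_mul_of_nonneg_left (le_sub_iff_add_le'.mpr hω) hω_nonneg
  linarith

theorem integral_sq_sum_eq_of_bound {ι : Type*} [Fintype ι] [LinearOrder ι] {f : ι → Ω → ℝ}
    (hf : ∀ i, AEStronglyMeasurable (f i) P) {C : ℝ} (hf_bdd : ∀ i, ∀ᵐ ω ∂P, ‖f i ω‖ ≤ C) :
    ∫ ω, (∑ i, f i ω) ^ 2 ∂P = ∑ i, ∫ ω, f i ω ^ 2 ∂P
      + 2 * ∑ i, ∫ ω, f i ω * ∑ j ∈ univ.filter (fun j => i < j), f j ω ∂P := by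
  have hf_int (i) : Integrable (f i) P := .of_bound (hf i) C (hf_bdd i)
  have hf_sq_int (i) : Integrable (fun ω => f i ω ^ 2) P := by
    simpa only [sq] using (hf_int i).bdd_mul (hf i) (hf_bdd i)
  have hf_cross_int (i) :
      Integrable (fun ω => f i ω * ∑ j ∈ univ.filter (fun j => i < j), f j ω) P :=
    (integrable_finsetSum _ fun j _ => hf_int j).bdd_mul (hf i) (hf_bdd i)
  simp_rw [sq_sum_eq_sum_sq_add_two_mul_sum_lt]
  rw [integral_add (integrable_finsetSum _ fun i _ => hf_sq_int i)
    ((integrable_finsetSum _ fun i _ => hf_cross_int i).const_mul 2), integral_const_mul,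
    integral_finsetSum _ fun i _ => hf_sq_int i, integral_finsetSum _ fun i _ => hf_cross_int i]

end

theorem fully_correlated_second_moment_general
    {Ω : Type*} {m0 : MeasurableSpace Ω} (P : Measure Ω) [IsProbabilityMeasure P]
    (n : ℕ) (ℱ : Fin n → MeasurableSpace Ω)
    (hle : ∀ j, ℱ j ≤ m0)
    (x : Fin n → Ω → ℝ)
    (hmeas : ∀ j, Measurable[ℱ j] (x j))
    (h0 : ∀ j ω, 0 ≤ x j ω) (h1 : ∀ j ω, x j ω ≤ 1)
    (hcond : ∀ j, ∀ᵐ ω ∂P,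
      x j ω + (P[fun ω' => ∑ k ∈ Finset.univ.filter (fun k => j < k), x k ω' | ℱ j]) ω ≤ 1)
    (μ : ℝ) (hμ : μ = ∫ ω, (∑ j, x j ω) ∂P) :
    ∫ ω, (∑ j, x j ω) ^ 2 ∂P ≤ 2 * μ - ∑ j, ∫ ω, (x j ω) ^ 2 ∂P := by
  have hx_meas (j) : AEStronglyMeasurable (x j) P :=
    ((hmeas j).mono (hle j) le_rfl).aestronglyMeasurable
  have hx_bdd (j) : ∀ᵐ ω ∂P, ‖x j ω‖ ≤ 1 :=
    .of_forall fun ω => by rw [Real.norm_of_nonneg (h0 j ω)]; exact h1 j ω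
  have hx_int (j) : Integrable (x j) P := .of_bound (hx_meas j) 1 (hx_bdd j)
  have h_cross (j) : ∫ ω, x j ω * ∑ k ∈ univ.filter (fun k => j < k), x k ω ∂P
      ≤ ∫ ω, x j ω ∂P - ∫ ω, x j ω ^ 2 ∂P :=
    integral_mul_le_integral_sub_integral_sq (hle j) (hmeas j).stronglyMeasurable
      (.of_forall (h0 j)) (hx_bdd j) (integrable_finsetSum _ fun k _ => hx_int k) (hcond j)
  rw [integral_sq_sum_eq_of_bound hx_meas hx_bdd, hμ,
    integral_finsetSum _ fun j _ => hx_int j]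
  have := sum_le_sum fun j (_ : j ∈ univ) => h_cross j
  rw [sum_sub_distrib] at this
  linarith

/-- Lemma 4.2(2): for an adapted sequence `x_j` of `[0,1]`-valued random variables such that
almost surely `x_j + E[Σ_{k>j} x_k | F_j] ≤ 1`, letting `ỹ = Σ_j x_j` and `μ = E[ỹ]`,
one has `E[ỹ²] ≤ 2μ − Σ_j E[x_j²]`. -/
theorem fully_correlated_second_moment
    {Ω : Type*} {m0 : MeasurableSpace Ω} (P : Measure Ω) [IsProbabilityMeasure P]
    (n : ℕ) (ℱ : Fin n → MeasurableSpace Ω)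
    (hmono : Monotone ℱ) (hle : ∀ j, ℱ j ≤ m0)
    (x : Fin n → Ω → ℝ)
    (hmeas : ∀ j, Measurable[ℱ j] (x j))
    (h0 : ∀ j ω, 0 ≤ x j ω) (h1 : ∀ j ω, x j ω ≤ 1)
    (hcond : ∀ j, ∀ᵐ ω ∂P,
      x j ω + (P[fun ω' => ∑ k ∈ Finset.univ.filter (fun k => j < k), x k ω' | ℱ j]) ω ≤ 1)
    (μ : ℝ) (hμ : μ = ∫ ω, (∑ j, x j ω) ∂P) :
    ∫ ω, (∑ j, x j ω) ^ 2 ∂P ≤ 2 * μ - ∑ j, ∫ ω, (x j ω) ^ 2 ∂P :=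
  fully_correlated_second_moment_general P n ℱ hle x hmeas h0 h1 hcond μ hμ
end

section
/- For each j ∈ {1, …, n} let T_j be a finite set and P_j : T_j → [0, 1] a probability mass function (Σ_{s ∈ T_j} P_j(s) = 1). Let r assign to each type vector t ∈ T_1 × ⋯ × T_n a vector (r_1(t), …, r_n(t)) of nonnegative reals with Σ_{j=1}^n r_j(t) ≤ 1. For j ∈ {1, …, n} and s ∈ T_j define z_j(s) = Σ_{t : t_j = s} (Π_{i=1}^n P_i(t_i)) · r_j(t). Then for every choice of subsets S_1 ⊆ T_1, …, S_n ⊆ T_n: Σ_{j=1}^n Σ_{s ∈ S_j} z_j(s) ≤ 1 − Π_{j=1}^n (1 − Σ_{s ∈ S_j} P_j(s)). -/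
open Finset

/-!
Exchanging the order of summation, the left side is the expectation of
`Σ_{j : t_j ∈ S_j} r_j(t)` under the product distribution. That sum is at most `1` and vanishes
unless some `t_j` lies in `S_j`, so the left side is at most the probability of this event, which
is one minus the probability `∏_j P_j(T_j \ S_j)` of its complement.
-/

section ProductDistribution
variable {ι : Type*} [Fintype ι] [DecidableEq ι] {T : ι → Type*} [∀ j, Fintype (T j)]
  [∀ j, DecidableEq (T j)]

theorem sum_sum_sum_filter_apply_eq_sum_sum_filter_mem
    (S : ∀ j, Finset (T j)) (f : (∀ j, T j) → ι → ℝ) :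
    ∑ j, ∑ s ∈ S j, ∑ t ∈ univ.filter (fun t : ∀ j, T j => t j = s), f t j
      = ∑ t, ∑ j ∈ univ.filter (fun j => t j ∈ S j), f t j := by
  simp only [sum_filter]
  rw [sum_comm]
  refine sum_congr rfl fun j _ => ?_
  rw [sum_comm]
  exact sum_congr rfl fun t _ => sum_ite_eq _ _ _

theorem sum_filter_exists_mem_prod_eq_one_sub_prod (P : ∀ j, T j → ℝ)
    (hP : ∀ j, ∑ s, P j s = 1) (S : ∀ j, Finset (T j))
    [DecidablePred fun t : ∀ j, T j => ∃ j, t j ∈ S j] :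
    ∑ t ∈ univ.filter (fun t : ∀ j, T j => ∃ j, t j ∈ S j), ∏ j, P j (t j)
      = 1 - ∏ j, (1 - ∑ s ∈ S j, P j s) := by
  have hcompl : (univ.filter fun t : ∀ j, T j => ∃ j, t j ∈ S j)ᶜ
      = Fintype.piFinset fun j => (S j)ᶜ := by
    ext t; simp
  have htotal : ∑ t : ∀ j, T j, ∏ j, P j (t j) = 1 := by
    rw [← Fintype.piFinset_univ, ← prod_univ_sum]; simp [hP]
  have hmiss : ∏ j, (1 - ∑ s ∈ S j, P j s)
      = ∑ t ∈ Fintype.piFinset fun j => (S j)ᶜ, ∏ j, P j (t j) := by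
    rw [← prod_univ_sum]
    refine prod_congr rfl fun j _ => ?_
    rw [← hP j, ← sum_add_sum_compl (S j), add_sub_cancel_left]
  rw [hmiss, ← hcompl, ← htotal,
    ← sum_add_sum_compl (univ.filter fun t : ∀ j, T j => ∃ j, t j ∈ S j), add_sub_cancel_right]
end ProductDistribution

/-- Lemma 6.5: for any selection rule `r` (mapping each type vector to a sub-probability
vector over the indices), letting `z_j(s)` be the probability that the type of vertex `j`
is `s` and `j` is selected (under independent types `t_j ∼ P_j`), one has, for all subsets
`S_j ⊆ T_j`: `Σ_j Σ_{s ∈ S_j} z_j(s) ≤ 1 − Π_j (1 − Σ_{s ∈ S_j} P_j(s))`. -/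
theorem selection_rule_polytope_constraint
    (n : ℕ) (T : Fin n → Type*) [∀ j, Fintype (T j)] [∀ j, DecidableEq (T j)]
    (Pm : ∀ j, T j → ℝ) (hP0 : ∀ j s, 0 ≤ Pm j s) (hP1 : ∀ j, ∑ s, Pm j s = 1)
    (r : (∀ j, T j) → Fin n → ℝ)
    (hr0 : ∀ t j, 0 ≤ r t j) (hr1 : ∀ t, ∑ j, r t j ≤ 1)
    (z : ∀ j, T j → ℝ)
    (hz : ∀ j s, z j s =
      ∑ t ∈ Finset.univ.filter (fun t : ∀ j, T j => t j = s), (∏ i, Pm i (t i)) * r t j)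
    (S : ∀ j, Finset (T j)) :
    ∑ j, ∑ s ∈ S j, z j s ≤ 1 - ∏ j, (1 - ∑ s ∈ S j, Pm j s) := by
  have hselected (t : ∀ j, T j) :
      ∑ j ∈ univ.filter (fun j => t j ∈ S j), (∏ i, Pm i (t i)) * r t j
        ≤ if ∃ j, t j ∈ S j then ∏ i, Pm i (t i) else 0 := by
    rw [← mul_sum]
    split_ifs with hhit
    · refine mul_le_of_le_one_right (prod_nonneg fun i _ => hP0 i (t i)) ?_
      exact (sum_le_sum_of_subset_of_nonneg (subset_univ _) fun j _ _ => hr0 t j).trans (hr1 t)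
    · simp [filter_false_of_mem fun j _ => not_exists.1 hhit j]
  calc ∑ j, ∑ s ∈ S j, z j s
      = ∑ t, ∑ j ∈ univ.filter (fun j => t j ∈ S j), (∏ i, Pm i (t i)) * r t j := by
        simp only [hz]; exact sum_sum_sum_filter_apply_eq_sum_sum_filter_mem S _
    _ ≤ ∑ t ∈ univ.filter (fun t : ∀ j, T j => ∃ j, t j ∈ S j), ∏ i, Pm i (t i) := by
        rw [sum_filter]; exact sum_le_sum fun t _ => hselected t
    _ = 1 - ∏ j, (1 - ∑ s ∈ S j, Pm j s) :=
        sum_filter_exists_mem_prod_eq_one_sub_prod Pm hP1 S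
end

section
/- Under the i.i.d. equivariant selection setup, let W₁ ⊆ W₂ ⊆ {1, …, n} be subsets and j ∈ W₁ an index, with |W₁| = ℓ ≥ 1. Then E[X_j^{W₁} · X_j^{W₂}] ≤ (1/ℓ) · E[(Q_{W₁})²]. -/
/-!
Because `X_j^{W₁}` is `t_{W₁}`-measurable and `W₁ ⊆ W₂`, pulling it out of the conditional
expectation given `t_{W₂}` and then given `t_{W₁}` turns `E[X_j^{W₁} X_j^{W₂}]` into
`E[(X_j^{W₁})²]`. For `i, j ∈ W₁` the transposition of the coordinates `i` and `j` preserves the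
product measure and the window σ-algebra, and by equivariance it exchanges the events `f = i`
and `f = j`; hence it carries `X_j^{W₁}` to `X_i^{W₁}`, and all `E[(X_i^{W₁})²]`, `i ∈ W₁`, are
equal. Finally `Q_{W₁} = ∑_{i ∈ W₁} X_i^{W₁}` with nonnegative summands, so
`ℓ · E[(X_j^{W₁})²] = E[∑_i (X_i^{W₁})²] ≤ E[Q_{W₁}²]`.
-/

open MeasureTheory
open scoped Classical

/-- A selection function `f : Sⁿ → {1,…,n} ∪ {⊥}` is permutation-equivariant if
`f(s ∘ σ) = σ⁻¹(f(s))` (with `⊥ ↦ ⊥`). -/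
def PermEquivariant {S : Type*} {n : ℕ} (f : (Fin n → S) → Option (Fin n)) : Prop :=
  ∀ (σ : Equiv.Perm (Fin n)) (s : Fin n → S),
    f (fun i => s (σ i)) = Option.map σ.symm (f s)

/-- The σ-algebra generated by the coordinates in the window `W`. -/
def windowSigma {S : Type*} [MeasurableSpace S] (n : ℕ) (W : Finset (Fin n)) :
    MeasurableSpace (Fin n → S) :=
  ⨆ i ∈ W, MeasurableSpace.comap (fun s : Fin n → S => s i) inferInstance

/-- `Q_W = P[f(t) ∈ W | t_W]`, the conditional probability that `f` selects an index in `W`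
given the coordinates in `W`, under the i.i.d. product measure. -/
noncomputable def Qwin {S : Type*} [MeasurableSpace S] (D : Measure S) (n : ℕ)
    (f : (Fin n → S) → Option (Fin n)) (W : Finset (Fin n)) : (Fin n → S) → ℝ :=
  (Measure.pi fun _ : Fin n => D)[(fun s => if ∃ j ∈ W, f s = some j then (1 : ℝ) else 0) |
    windowSigma n W]

/-- `X_j^W = P[f(t) = j | t_W]`, the windowed estimator with window `W`. -/
noncomputable def Xwin {S : Type*} [MeasurableSpace S] (D : Measure S) (n : ℕ)
    (f : (Fin n → S) → Option (Fin n)) (j : Fin n) (W : Finset (Fin n)) : (Fin n → S) → ℝ :=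
  (Measure.pi fun _ : Fin n => D)[(fun s => if f s = some j then (1 : ℝ) else 0) |
    windowSigma n W]

namespace MeasureTheory

section CondExp

variable {Ω E : Type*} {m m₂ m0 : MeasurableSpace Ω} {μ : Measure Ω}

lemma integrable_condExp_mul_of_ae_bdd {g h : Ω → ℝ} {C : ℝ} (hg : ∀ᵐ x ∂μ, |g x| ≤ C)
    (hh : Integrable h μ) : Integrable (fun x => μ[g | m] x * h x) μ :=
  hh.bdd_mul integrable_condExp.aestronglyMeasurable <| by
    simpa only [Real.norm_eq_abs] using ae_bdd_abs_condExp_of_ae_bdd_abs hg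

lemma integrable_condExp_sq_of_ae_bdd {g : Ω → ℝ} {C : ℝ} (hg : ∀ᵐ x ∂μ, |g x| ≤ C) :
    Integrable (fun x => μ[g | m] x ^ 2) μ := by
  simpa only [sq] using integrable_condExp_mul_of_ae_bdd hg integrable_condExp

lemma integral_mul_condExp_of_stronglyMeasurable (hm : m ≤ m0) [SigmaFinite (μ.trim hm)]
    {Y g : Ω → ℝ} (hY : StronglyMeasurable[m] Y) (hYg : Integrable (Y * g) μ)
    (hg : Integrable g μ) :
    ∫ x, Y x * μ[g | m] x ∂μ = ∫ x, Y x * g x ∂μ :=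
  (integral_congr_ae (condExp_mul_of_stronglyMeasurable_left hY hYg hg)).symm.trans
    (integral_condExp hm)

lemma integral_condExp_mul_condExp_of_le [IsFiniteMeasure μ] (hm : m ≤ m₂) (hm₂ : m₂ ≤ m0)
    {g : Ω → ℝ} {C : ℝ} (hg : Integrable g μ) (hgC : ∀ᵐ x ∂μ, |g x| ≤ C) :
    ∫ x, μ[g | m] x * μ[g | m₂] x ∂μ = ∫ x, μ[g | m] x ^ 2 ∂μ := by
  have hYg : Integrable (μ[g | m] * g) μ := integrable_condExp_mul_of_ae_bdd hgC hg
  rw [integral_mul_condExp_of_stronglyMeasurable hm₂ (stronglyMeasurable_condExp.mono hm) hYg hg,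
    ← integral_mul_condExp_of_stronglyMeasurable (hm.trans hm₂) stronglyMeasurable_condExp hYg hg]
  simp only [sq]

variable [NormedAddCommGroup E] [NormedSpace ℝ E] [CompleteSpace E]

lemma condExp_comp_measurePreserving (hm : m ≤ m0) [SigmaFinite (μ.trim hm)]
    (T : Ω ≃ᵐ Ω) (hT : MeasurePreserving T μ μ) (hTm : Measurable[m, m] T)
    (hTm' : Measurable[m, m] T.symm) {g : Ω → E} (hg : Integrable g μ) :
    μ[g ∘ T | m] =ᵐ[μ] μ[g | m] ∘ T := by
  have hemb := T.measurableEmbedding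
  refine (ae_eq_condExp_of_forall_setIntegral_eq hm ((hT.integrable_comp_emb hemb).mpr hg)
    (fun A _ _ => ((hT.integrable_comp_emb hemb).mpr integrable_condExp).integrableOn)
    (fun A hA _ => ?_)
    (stronglyMeasurable_condExp.comp_measurable hTm).aestronglyMeasurable).symm
  have hA' : T ⁻¹' (T.symm ⁻¹' A) = A := by ext; simp
  have hB : MeasurableSet[m] (T.symm ⁻¹' A) := hTm' hA
  rw [← hA']
  simp only [Function.comp_apply, hT.setIntegral_preimage_emb hemb]
  exact setIntegral_condExp hm hg hB

end CondExp

end MeasureTheory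

section Window

variable {S : Type*} [MeasurableSpace S] {n : ℕ}

lemma windowSigma_le (W : Finset (Fin n)) :
    windowSigma (S := S) n W ≤ MeasurableSpace.pi :=
  iSup₂_le fun i _ => (measurable_pi_apply i).comap_le

lemma windowSigma_mono {W₁ W₂ : Finset (Fin n)} (h : W₁ ⊆ W₂) :
    windowSigma (S := S) n W₁ ≤ windowSigma n W₂ :=
  biSup_mono fun _ hi => h hi

lemma measurable_comp_perm_windowSigma {W : Finset (Fin n)} {σ : Equiv.Perm (Fin n)}
    (hσ : ∀ k ∈ W, σ k ∈ W) :
    Measurable[windowSigma n W, windowSigma n W] fun (s : Fin n → S) k => s (σ k) := by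
  rw [measurable_iff_comap_le, windowSigma, MeasurableSpace.comap_iSup]
  refine iSup_le fun i => ?_
  rw [MeasurableSpace.comap_iSup]
  refine iSup_le fun hi => ?_
  rw [MeasurableSpace.comap_comp]
  exact le_iSup₂ (f := fun i (_ : i ∈ W) =>
    MeasurableSpace.comap (fun s : Fin n → S => s i) inferInstance) (σ i) (hσ i hi)

end Window

lemma abs_ite_one_zero_le_one (p : Prop) [Decidable p] : |(if p then (1 : ℝ) else 0)| ≤ 1 := by
  split_ifs <;> norm_num

lemma ite_exists_eq_some_eq_sum {α : Type*} [DecidableEq α] (o : Option α) (W : Finset α)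
    [Decidable (∃ j ∈ W, o = some j)] :
    (if ∃ j ∈ W, o = some j then (1 : ℝ) else 0) = ∑ i ∈ W, if o = some i then 1 else 0 := by
  cases o <;> simp [Finset.sum_ite_eq]

section PermCoordinates

variable {S : Type*} [MeasurableSpace S] {n : ℕ}

lemma coe_piCongrLeft_perm (σ : Equiv.Perm (Fin n)) :
    ⇑(MeasurableEquiv.piCongrLeft (fun _ => S) σ) = fun s k => s (σ.symm k) := by
  ext s k
  simp [MeasurableEquiv.coe_piCongrLeft, Equiv.piCongrLeft_apply]

lemma coe_piCongrLeft_perm_symm (σ : Equiv.Perm (Fin n)) :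
    ⇑(MeasurableEquiv.piCongrLeft (fun _ => S) σ).symm = fun s k => s (σ k) := by
  ext s : 1
  apply (MeasurableEquiv.piCongrLeft (fun _ => S) σ).injective
  rw [MeasurableEquiv.apply_symm_apply, coe_piCongrLeft_perm]
  simp

end PermCoordinates

section Selection

variable {S : Type*} [MeasurableSpace S] {n : ℕ} (D : Measure S)
  {f : (Fin n → S) → Option (Fin n)}

lemma Xwin_nonneg (j : Fin n) (W : Finset (Fin n)) :
    0 ≤ᵐ[Measure.pi fun _ : Fin n => D] Xwin D n f j W :=
  condExp_nonneg (ae_of_all _ fun _ => by dsimp only; split_ifs <;> norm_num)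

lemma integrable_Xwin_sq (j : Fin n) (W : Finset (Fin n)) :
    Integrable (fun s => Xwin D n f j W s ^ 2) (Measure.pi fun _ : Fin n => D) :=
  integrable_condExp_sq_of_ae_bdd (ae_of_all _ fun _ => abs_ite_one_zero_le_one _)

lemma integrable_Qwin_sq (W : Finset (Fin n)) :
    Integrable (fun s => Qwin D n f W s ^ 2) (Measure.pi fun _ : Fin n => D) :=
  integrable_condExp_sq_of_ae_bdd (ae_of_all _ fun _ => abs_ite_one_zero_le_one _)

variable [IsProbabilityMeasure D]

lemma integrable_ite_eq_some
    (hfmeas : ∀ o : Option (Fin n), MeasurableSet {s : Fin n → S | f s = o}) (j : Fin n) :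
    Integrable (fun s => if f s = some j then (1 : ℝ) else 0) (Measure.pi fun _ : Fin n => D) :=
  (integrable_const (1 : ℝ)).mono'
    (Measurable.ite (hfmeas (some j)) measurable_const measurable_const).aestronglyMeasurable
    (ae_of_all _ fun _ => abs_ite_one_zero_le_one _)

lemma Qwin_ae_eq_sum_Xwin
    (hfmeas : ∀ o : Option (Fin n), MeasurableSet {s : Fin n → S | f s = o}) (W : Finset (Fin n)) :
    Qwin D n f W =ᵐ[Measure.pi fun _ : Fin n => D] ∑ i ∈ W, Xwin D n f i W := by
  have hsum : (fun s => if ∃ j ∈ W, f s = some j then (1 : ℝ) else 0)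
      = ∑ i ∈ W, fun s => if f s = some i then (1 : ℝ) else 0 := by
    ext s
    rw [Finset.sum_apply]
    exact ite_exists_eq_some_eq_sum (f s) W
  rw [Qwin, hsum]
  exact condExp_finsetSum (fun i _ => integrable_ite_eq_some D hfmeas i) _

lemma integral_Xwin_mul_Xwin_of_subset
    (hfmeas : ∀ o : Option (Fin n), MeasurableSet {s : Fin n → S | f s = o})
    {W₁ W₂ : Finset (Fin n)} (hsub : W₁ ⊆ W₂) (j : Fin n) :
    ∫ s, Xwin D n f j W₁ s * Xwin D n f j W₂ s ∂(Measure.pi fun _ : Fin n => D)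
      = ∫ s, Xwin D n f j W₁ s ^ 2 ∂(Measure.pi fun _ : Fin n => D) :=
  integral_condExp_mul_condExp_of_le (windowSigma_mono hsub) (windowSigma_le W₂)
    (integrable_ite_eq_some D hfmeas j) (ae_of_all _ fun _ => abs_ite_one_zero_le_one _)

lemma Xwin_ae_eq_comp_perm
    (hfmeas : ∀ o : Option (Fin n), MeasurableSet {s : Fin n → S | f s = o})
    (hequiv : PermEquivariant f) {W : Finset (Fin n)} {σ : Equiv.Perm (Fin n)}
    (hσ : ∀ k, σ k ∈ W ↔ k ∈ W) (i : Fin n) :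
    Xwin D n f (σ.symm i) W =ᵐ[Measure.pi fun _ : Fin n => D]
      Xwin D n f i W ∘ MeasurableEquiv.piCongrLeft (fun _ => S) σ := by
  set T := MeasurableEquiv.piCongrLeft (fun _ : Fin n => S) σ
  have hT : MeasurePreserving T (Measure.pi fun _ : Fin n => D) (Measure.pi fun _ : Fin n => D) :=
    measurePreserving_piCongrLeft (fun _ => D) σ
  have hTm : Measurable[windowSigma n W, windowSigma n W] T := by
    rw [coe_piCongrLeft_perm]
    exact measurable_comp_perm_windowSigma fun k hk => by rwa [← hσ, Equiv.apply_symm_apply]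
  have hTm' : Measurable[windowSigma n W, windowSigma n W] T.symm := by
    rw [coe_piCongrLeft_perm_symm]
    exact measurable_comp_perm_windowSigma fun k hk => (hσ k).2 hk
  have hind : (fun s => if f s = some i then (1 : ℝ) else 0) ∘ T
      = fun s => if f s = some (σ.symm i) then (1 : ℝ) else 0 := by
    ext s
    have hfT : f (T s) = Option.map σ (f s) := by
      simpa [T, coe_piCongrLeft_perm] using hequiv σ.symm s
    simp only [Function.comp_apply, hfT]
    cases f s <;> simp [Equiv.eq_symm_apply]
  rw [Xwin, ← hind]
  exact condExp_comp_measurePreserving (windowSigma_le W) T hT hTm hTm'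
    (integrable_ite_eq_some D hfmeas i)

lemma integral_Xwin_sq_eq_of_mem
    (hfmeas : ∀ o : Option (Fin n), MeasurableSet {s : Fin n → S | f s = o})
    (hequiv : PermEquivariant f) {W : Finset (Fin n)} {i j : Fin n} (hi : i ∈ W) (hj : j ∈ W) :
    ∫ s, Xwin D n f i W s ^ 2 ∂(Measure.pi fun _ : Fin n => D)
      = ∫ s, Xwin D n f j W s ^ 2 ∂(Measure.pi fun _ : Fin n => D) := by
  have hswap : ∀ k, Equiv.swap j i k ∈ W ↔ k ∈ W := by
    intro k
    rcases eq_or_ne k j with rfl | hkj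
    · simp [hi, hj]
    rcases eq_or_ne k i with rfl | hki
    · simp [hi, hj]
    · rw [Equiv.swap_apply_of_ne_of_ne hkj hki]
  have h := Xwin_ae_eq_comp_perm D hfmeas hequiv hswap j
  rw [Equiv.symm_swap, Equiv.swap_apply_left] at h
  calc ∫ s, Xwin D n f i W s ^ 2 ∂(Measure.pi fun _ : Fin n => D)
      = ∫ s, Xwin D n f j W (MeasurableEquiv.piCongrLeft (fun _ => S) (Equiv.swap j i) s) ^ 2
          ∂(Measure.pi fun _ : Fin n => D) := integral_congr_ae (h.fun_comp (· ^ 2))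
    _ = ∫ s, Xwin D n f j W s ^ 2 ∂(Measure.pi fun _ : Fin n => D) :=
      (measurePreserving_piCongrLeft (fun _ => D) (Equiv.swap j i)).integral_comp'
        fun s => Xwin D n f j W s ^ 2

lemma card_mul_integral_Xwin_sq_le
    (hfmeas : ∀ o : Option (Fin n), MeasurableSet {s : Fin n → S | f s = o})
    (hequiv : PermEquivariant f) {W : Finset (Fin n)} {j : Fin n} (hj : j ∈ W) :
    W.card * ∫ s, Xwin D n f j W s ^ 2 ∂(Measure.pi fun _ : Fin n => D)
      ≤ ∫ s, Qwin D n f W s ^ 2 ∂(Measure.pi fun _ : Fin n => D) :=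
  calc W.card * ∫ s, Xwin D n f j W s ^ 2 ∂(Measure.pi fun _ : Fin n => D)
      = ∑ i ∈ W, ∫ s, Xwin D n f i W s ^ 2 ∂(Measure.pi fun _ : Fin n => D) := by
        rw [Finset.sum_congr rfl fun i hi => integral_Xwin_sq_eq_of_mem D hfmeas hequiv hi hj,
          Finset.sum_const, nsmul_eq_mul]
    _ = ∫ s, ∑ i ∈ W, Xwin D n f i W s ^ 2 ∂(Measure.pi fun _ : Fin n => D) :=
        (integral_finsetSum _ fun i _ => integrable_Xwin_sq D i W).symm
    _ ≤ ∫ s, Qwin D n f W s ^ 2 ∂(Measure.pi fun _ : Fin n => D) := by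
        refine integral_mono_ae (integrable_finsetSum _ fun i _ => integrable_Xwin_sq D i W)
          (integrable_Qwin_sq D W) ?_
        filter_upwards [Qwin_ae_eq_sum_Xwin D hfmeas W, ae_all_iff.2 fun i => Xwin_nonneg D i W]
          with s hQ hX
        rw [hQ, Finset.sum_apply]
        exact Finset.sum_sq_le_sq_sum_of_nonneg fun i _ => hX i

end Selection

/-- Lemma 5.1 (abstracted): for nested windows `W₁ ⊆ W₂` and `j ∈ W₁` with `|W₁| = ℓ ≥ 1`,
`E[X_j^{W₁} · X_j^{W₂}] ≤ (1/ℓ)·E[(Q_{W₁})²]`. -/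
theorem windowed_estimator_same_vertex
    {S : Type*} [MeasurableSpace S] (n : ℕ)
    (D : Measure S) [IsProbabilityMeasure D]
    (f : (Fin n → S) → Option (Fin n))
    (hfmeas : ∀ o : Option (Fin n), MeasurableSet {s : Fin n → S | f s = o})
    (hequiv : PermEquivariant f)
    (W₁ W₂ : Finset (Fin n)) (hsub : W₁ ⊆ W₂) (j : Fin n) (hj : j ∈ W₁)
    (ℓ : ℕ) (hℓ : ℓ = W₁.card) (hℓ1 : 1 ≤ ℓ) :
    ∫ s, Xwin D n f j W₁ s * Xwin D n f j W₂ s ∂(Measure.pi fun _ : Fin n => D)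
      ≤ (1 / ℓ) * ∫ s, (Qwin D n f W₁ s) ^ 2 ∂(Measure.pi fun _ : Fin n => D) := by
  have hℓpos : (0 : ℝ) < ℓ := by exact_mod_cast hℓ1
  rw [integral_Xwin_mul_Xwin_of_subset D hfmeas hsub j, one_div_mul_eq_div, le_div_iff₀ hℓpos,
    mul_comm, hℓ]
  exact card_mul_integral_Xwin_sq_le D hfmeas hequiv hj
end

section
/- Under the i.i.d. equivariant selection setup, let j ≠ k be indices in {1, …, n} and A, B ⊆ {1, …, n} with j ∈ A and k ∈ B, and set W = A ∩ B. (i) If j ∈ W, k ∉ W and |W| = ℓ ≥ 1, then E[X_j^A · X_k^B] ≤ E[Q_W · (1 − Q_W)] / (ℓ·(n − ℓ)). (ii) If W = ∅, then E[X_j^A · X_k^B] = μ²/n², where μ = P[f(t) ≠ ⊥]. -/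
open MeasureTheory
open scoped Classical

/-!
Conditioning the i.i.d. vector on the coordinates in a window `W` amounts to integrating out
the other coordinates, which gives everywhere-defined versions `windowAvg` of `X_j^W` and `Q_W`.
Once the coordinates in `W = A ∩ B` are frozen, `X_j^A` and `X_k^B` are functions of the
disjoint blocks `A \ B` and `B \ A` of fresh coordinates, hence independent, and the tower
property gives `E[X_j^A X_k^B] = E[X_j^W X_k^W]`. Permutations preserving `W` preserve the
product measure, so by equivariance `E[X_{j'}^W X_{k'}^W]` is the same for all `j' ∈ W`,
`k' ∉ W`. Summing over these `ℓ(n - ℓ)` pairs gives `E[Q_W R]` with `Q_W = ∑_{j' ∈ W} X_{j'}^W`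
and `R = ∑_{k' ∉ W} X_{k'}^W ≤ 1 - Q_W`, whence (i). For `W = ∅` the estimators are the
constants `P[f(t) = j] = μ / n`, whence (ii).
-/

theorem cylinderEvents_eq_comap_domRestrict {ι : Type*} {X : ι → Type*}
    [∀ i, MeasurableSpace (X i)] (Δ : Set ι) :
    cylinderEvents (X := X) Δ = MeasurableSpace.pi.comap Δ.domRestrict := by
  refine le_antisymm (iSup₂_le fun i hi => ?_) (measurable_restrict_cylinderEvents Δ).comap_le
  rw [show (fun x : ∀ i, X i => x i) = (fun y : ∀ j : Δ, X j => y ⟨i, hi⟩) ∘ Δ.domRestrict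
    from rfl, ← MeasurableSpace.comap_comp]
  exact MeasurableSpace.comap_mono (measurable_pi_apply (X := fun j : Δ => X j) ⟨i, hi⟩).comap_le

theorem DependsOn.comp_piecewise {ι : Type*} [DecidableEq ι] {α : ι → Type*} {β : Type*}
    {f : (∀ i, α i) → β} {t : Set ι} (hf : DependsOn f t) (W : Finset ι) (x : ∀ i, α i) :
    DependsOn (fun u => f (W.piecewise x u)) (t \ W) := fun u u' h => hf fun i hi => by
  by_cases hiW : i ∈ W
  · simp [hiW]
  · simp [hiW, h i ⟨hi, hiW⟩]

theorem exists_perm_mem_iff_apply_eq {ι : Type*} [DecidableEq ι] {W : Finset ι}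
    {j j' k k' : ι} (hj : j ∈ W) (hj' : j' ∈ W) (hk : k ∉ W) (hk' : k' ∉ W) :
    ∃ σ : Equiv.Perm ι, (∀ i, σ i ∈ W ↔ i ∈ W) ∧ σ j' = j ∧ σ k' = k := by
  have hswap : ∀ {a b : ι}, (a ∈ W ↔ b ∈ W) → ∀ i, Equiv.swap a b i ∈ W ↔ i ∈ W := by
    intro a b hab i
    rw [Equiv.swap_apply_def]
    split_ifs <;> subst_vars <;> tauto
  refine ⟨(Equiv.swap j j').trans (Equiv.swap k k'), fun i => ?_, ?_, ?_⟩
  · exact (hswap (iff_of_false hk hk') _).trans (hswap (iff_of_true hj hj') i)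
  · simp only [Equiv.trans_apply, Equiv.swap_apply_right]
    exact Equiv.swap_apply_of_ne_of_ne (ne_of_mem_of_not_mem hj hk) (ne_of_mem_of_not_mem hj hk')
  · simp only [Equiv.trans_apply, Equiv.swap_apply_of_ne_of_ne (ne_of_mem_of_not_mem hj hk').symm
      (ne_of_mem_of_not_mem hj' hk').symm, Equiv.swap_apply_right]

theorem integral_comp_perm {ι S : Type*} [Fintype ι] [MeasurableSpace S] {D : Measure S}
    [SigmaFinite D] (σ : Equiv.Perm ι) (g : (ι → S) → ℝ) :
    ∫ x, g (fun i => x (σ i)) ∂Measure.pi (fun _ => D) = ∫ x, g x ∂Measure.pi fun _ => D :=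
  (measurePreserving_arrowCongr' (fun _ => D) (fun _ => D) σ.symm (MeasurableEquiv.refl S)
    fun _ => .id D).integral_comp' g

theorem sum_mul_sum_compl_le {ι : Type*} [Fintype ι] [DecidableEq ι] (W : Finset ι)
    {a : ι → ℝ} (ha : ∀ i, 0 ≤ a i) (ha_sum : ∑ i, a i ≤ 1) :
    (∑ i ∈ W, a i) * ∑ i ∈ Wᶜ, a i ≤ (∑ i ∈ W, a i) * (1 - ∑ i ∈ W, a i) :=
  mul_le_mul_of_nonneg_left (by linarith [Finset.sum_add_sum_compl W a])
    (Finset.sum_nonneg fun i _ => ha i)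

namespace WindowAverage

variable {ι : Type*} [DecidableEq ι] {α : ι → Type*} [∀ i, MeasurableSpace (α i)]

theorem measurable_piecewise_cylinderEvents (W : Finset ι) :
    Measurable[@Prod.instMeasurableSpace _ _ (cylinderEvents (W : Set ι)) _]
      fun p : (∀ i, α i) × (∀ i, α i) => W.piecewise p.1 p.2 := by
  refine (@measurable_pi_iff _ _ _ (@Prod.instMeasurableSpace _ _ (cylinderEvents (W : Set ι)) _)
    _ _).mpr fun i => ?_
  by_cases hi : i ∈ W
  · simp only [Finset.piecewise_eq_of_mem _ _ _ hi]
    exact (measurable_cylinderEvent_apply hi).comp measurable_fst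
  · simp only [Finset.piecewise_eq_of_notMem _ _ _ hi]
    exact (measurable_pi_apply i).comp measurable_snd

theorem measurable_piecewise (W : Finset ι) :
    Measurable fun p : (∀ i, α i) × (∀ i, α i) => W.piecewise p.1 p.2 :=
  (measurable_piecewise_cylinderEvents W).mono
    (sup_le_sup_right (MeasurableSpace.comap_mono cylinderEvents_le_pi) _) le_rfl

theorem _root_.Measurable.comp_piecewise {β : Type*} [MeasurableSpace β]
    {f : (∀ i, α i) → β} (hf : Measurable f) (W : Finset ι) (x : ∀ i, α i) :
    Measurable fun u => f (W.piecewise x u) :=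
  hf.comp ((measurable_piecewise W).comp measurable_prodMk_left)

theorem piecewise_mem_iff_of_measurableSet_cylinderEvents {W : Finset ι} {E : Set (∀ i, α i)}
    (hE : MeasurableSet[cylinderEvents (W : Set ι)] E) (x y : ∀ i, α i) :
    W.piecewise x y ∈ E ↔ x ∈ E := by
  rw [cylinderEvents_eq_comap_domRestrict] at hE
  obtain ⟨E', -, rfl⟩ := hE
  have : (W : Set ι).domRestrict (W.piecewise x y) = (W : Set ι).domRestrict x :=
    funext fun i => Finset.piecewise_eq_of_mem _ _ _ i.2
  rw [Set.mem_preimage, Set.mem_preimage, this]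

variable [Fintype ι] (μ : ∀ i, Measure (α i))

noncomputable def windowAvg (W : Finset ι) (g : (∀ i, α i) → ℝ) (x : ∀ i, α i) : ℝ :=
  ∫ y, g (W.piecewise x y) ∂Measure.pi μ

theorem windowAvg_indicator {W : Finset ι} {g : (∀ i, α i) → ℝ} {E : Set (∀ i, α i)}
    (hE : MeasurableSet[cylinderEvents (W : Set ι)] E) :
    windowAvg μ W (E.indicator g) = E.indicator (windowAvg μ W g) := by
  ext x
  by_cases hx : x ∈ E <;>
    simp [windowAvg, hx, piecewise_mem_iff_of_measurableSet_cylinderEvents hE]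

theorem dependsOn_windowAvg (W : Finset ι) (g : (∀ i, α i) → ℝ) :
    DependsOn (windowAvg μ W g) W := fun x x' h => by
  simp only [windowAvg, W.piecewise_congr (fun i hi => h i hi) fun _ _ => rfl]

theorem windowAvg_empty (g : (∀ i, α i) → ℝ) (x : ∀ i, α i) :
    windowAvg μ ∅ g x = ∫ y, g y ∂Measure.pi μ := by
  simp [windowAvg]

variable [∀ i, IsProbabilityMeasure (μ i)]

theorem measurePreserving_piecewise (W : Finset ι) :
    MeasurePreserving (fun p : (∀ i, α i) × (∀ i, α i) => W.piecewise p.1 p.2)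
      ((Measure.pi μ).prod (Measure.pi μ)) (Measure.pi μ) := by
  refine ⟨measurable_piecewise W, (Measure.pi_eq fun t ht => ?_).symm⟩
  have hpre : (fun p : (∀ i, α i) × (∀ i, α i) => W.piecewise p.1 p.2) ⁻¹' Set.univ.pi t =
      Set.univ.pi (W.piecewise t fun _ => Set.univ) ×ˢ
        Set.univ.pi (W.piecewise (fun _ => Set.univ) t) := by
    ext p
    simp only [Set.mem_preimage, Set.mem_prod, Set.mem_univ_pi, ← forall_and]
    refine forall_congr' fun i => ?_
    by_cases hi : i ∈ W <;> simp [hi]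
  rw [Measure.map_apply (measurable_piecewise W) (.univ_pi ht), hpre, Measure.prod_prod,
    Measure.pi_pi, Measure.pi_pi, ← Finset.prod_mul_distrib]
  refine Finset.prod_congr rfl fun i _ => ?_
  by_cases hi : i ∈ W <;> simp [hi]

variable {μ} {W : Finset ι} {g : (∀ i, α i) → ℝ}

theorem integrable_comp_piecewise (hg : Integrable g (Measure.pi μ)) :
    Integrable (fun p : (∀ i, α i) × (∀ i, α i) => g (W.piecewise p.1 p.2))
      ((Measure.pi μ).prod (Measure.pi μ)) :=
  (measurePreserving_piecewise μ W).integrable_comp_of_integrable hg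

theorem integral_windowAvg (hg : Integrable g (Measure.pi μ)) :
    ∫ x, windowAvg μ W g x ∂Measure.pi μ = ∫ x, g x ∂Measure.pi μ := by
  have hmp := measurePreserving_piecewise μ W
  calc ∫ x, windowAvg μ W g x ∂Measure.pi μ
      = ∫ p, g (W.piecewise p.1 p.2) ∂(Measure.pi μ).prod (Measure.pi μ) :=
        (integral_prod _ (integrable_comp_piecewise hg)).symm
    _ = ∫ x, g x ∂Measure.pi μ := by
        rw [← integral_map hmp.measurable.aemeasurable (by rw [hmp.map_eq]; exact hg.1),
          hmp.map_eq]

theorem integrable_windowAvg (hg : Integrable g (Measure.pi μ)) :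
    Integrable (windowAvg μ W g) (Measure.pi μ) :=
  (integrable_comp_piecewise hg).integral_prod_left

theorem measurable_windowAvg_cylinderEvents (hg : Measurable g) :
    Measurable[cylinderEvents (W : Set ι)] (windowAvg μ W g) :=
  (@StronglyMeasurable.integral_prod_right' _ _ _ (cylinderEvents (W : Set ι)) _ _ _ _ _
    (fun p => g (W.piecewise p.1 p.2))
    (hg.comp (measurable_piecewise_cylinderEvents W)).stronglyMeasurable).measurable

theorem measurable_windowAvg (hg : Measurable g) : Measurable (windowAvg μ W g) :=
  (measurable_windowAvg_cylinderEvents hg).mono cylinderEvents_le_pi le_rfl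

theorem condExp_cylinderEvents_ae_eq_windowAvg (hg : Measurable g)
    (hgi : Integrable g (Measure.pi μ)) :
    (Measure.pi μ)[g | cylinderEvents (W : Set ι)] =ᵐ[Measure.pi μ] windowAvg μ W g := by
  refine (ae_eq_condExp_of_forall_setIntegral_eq cylinderEvents_le_pi hgi
    (fun E _ _ => (integrable_windowAvg hgi).integrableOn) (fun E hE _ => ?_)
    (measurable_windowAvg_cylinderEvents hg).aestronglyMeasurable).symm
  have hEm := cylinderEvents_le_pi E hE
  rw [← integral_indicator hEm, ← integral_indicator hEm,
    ← windowAvg_indicator (μ := μ) (g := g) hE, integral_windowAvg (hgi.indicator hEm)]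

variable {C : ℝ}

theorem abs_windowAvg_le (hgC : ∀ x, |g x| ≤ C) (x : ∀ i, α i) : |windowAvg μ W g x| ≤ C := by
  simpa [windowAvg] using norm_integral_le_of_norm_le_const (μ := Measure.pi μ)
    (f := fun y => g (W.piecewise x y)) (ae_of_all _ fun y => hgC (W.piecewise x y))

theorem windowAvg_finsetSum {κ : Type*} {T : Finset κ} {g : κ → (∀ i, α i) → ℝ}
    (hg : ∀ k ∈ T, Measurable (g k)) (hgC : ∀ k ∈ T, ∀ x, |g k x| ≤ C) (x : ∀ i, α i) :
    windowAvg μ W (fun y => ∑ k ∈ T, g k y) x = ∑ k ∈ T, windowAvg μ W (g k) x :=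
  integral_finsetSum T fun k hk => .of_bound ((hg k hk).comp_piecewise W x).aestronglyMeasurable
    C (ae_of_all _ fun _ => hgC k hk _)

theorem windowAvg_windowAvg {A : Finset ι} (hWA : W ⊆ A) (hg : Measurable g)
    (hgC : ∀ x, |g x| ≤ C) : windowAvg μ W (windowAvg μ A g) = windowAvg μ W g := by
  ext x
  have hcomm : ∀ u v, A.piecewise (W.piecewise x u) v = W.piecewise x (A.piecewise u v) := by
    intro u v
    ext i
    by_cases hiW : i ∈ W
    · simp [hiW, hWA hiW]
    · by_cases hiA : i ∈ A <;> simp [hiW, hiA]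
  calc windowAvg μ W (windowAvg μ A g) x
      = ∫ u, windowAvg μ A (fun u => g (W.piecewise x u)) u ∂Measure.pi μ := by
        simp only [windowAvg, hcomm]
    _ = windowAvg μ W g x := integral_windowAvg
        (.of_bound (hg.comp_piecewise W x).aestronglyMeasurable C (ae_of_all _ fun _ => hgC _))

theorem integral_mul_eq_mul_integral_of_dependsOn {F G : (∀ i, α i) → ℝ} (A : Finset ι)
    (hFG : Integrable (fun x => F x * G x) (Measure.pi μ)) (hFA : DependsOn F A)
    (hGA : DependsOn G (↑A)ᶜ) :
    ∫ x, F x * G x ∂Measure.pi μ = (∫ x, F x ∂Measure.pi μ) * ∫ x, G x ∂Measure.pi μ := by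
  have havg : windowAvg μ A (fun x => F x * G x) = fun x => F x * ∫ y, G y ∂Measure.pi μ := by
    ext x
    have hF : ∀ y, F (A.piecewise x y) = F x := fun y =>
      hFA fun i hi => Finset.piecewise_eq_of_mem _ _ _ hi
    have hG : ∀ y, G (A.piecewise x y) = G y := fun y =>
      hGA fun i hi => Finset.piecewise_eq_of_notMem _ _ _ hi
    simp only [windowAvg, hF, hG, integral_const_mul]
  rw [← integral_windowAvg hFG, havg, integral_mul_const]

theorem integral_windowAvg_mul_windowAvg_eq_inter {A B : Finset ι} {h : (∀ i, α i) → ℝ}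
    {C' : ℝ} (hg : Measurable g) (hgC : ∀ x, |g x| ≤ C) (hh : Measurable h)
    (hhC : ∀ x, |h x| ≤ C') :
    ∫ x, windowAvg μ A g x * windowAvg μ B h x ∂Measure.pi μ =
      ∫ x, windowAvg μ (A ∩ B) g x * windowAvg μ (A ∩ B) h x ∂Measure.pi μ := by
  rw [← integral_windowAvg (W := A ∩ B)
    ((integrable_windowAvg (.of_bound hg.aestronglyMeasurable C (ae_of_all _ hgC))).mul_bdd
      (measurable_windowAvg hh).aestronglyMeasurable (ae_of_all _ (abs_windowAvg_le hhC)))]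
  refine integral_congr_ae (ae_of_all _ fun x => ?_)
  have hgx := (measurable_windowAvg (μ := μ) (W := A) hg).comp_piecewise (A ∩ B) x
  have hhx := (measurable_windowAvg (μ := μ) (W := B) hh).comp_piecewise (A ∩ B) x
  -- With the coordinates in `A ∩ B` frozen, the factors depend on the disjoint blocks
  -- `A \ B` and `B \ A`.
  calc windowAvg μ (A ∩ B) (fun x => windowAvg μ A g x * windowAvg μ B h x) x
      = (∫ u, windowAvg μ A g ((A ∩ B).piecewise x u) ∂Measure.pi μ) *
          ∫ u, windowAvg μ B h ((A ∩ B).piecewise x u) ∂Measure.pi μ :=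
        integral_mul_eq_mul_integral_of_dependsOn A
          ((Integrable.of_bound hgx.aestronglyMeasurable C
            (ae_of_all _ fun _ => abs_windowAvg_le hgC _)).mul_bdd hhx.aestronglyMeasurable
            (ae_of_all _ fun _ => abs_windowAvg_le hhC _))
          (((dependsOn_windowAvg μ A g).comp_piecewise _ x).mono Set.sdiff_subset)
          (((dependsOn_windowAvg μ B h).comp_piecewise _ x).mono
            fun i hi hiA => hi.2 (Finset.mem_inter.2 ⟨hiA, hi.1⟩))
    _ = windowAvg μ (A ∩ B) g x * windowAvg μ (A ∩ B) h x := by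
        rw [← windowAvg_windowAvg Finset.inter_subset_left hg hgC,
          ← windowAvg_windowAvg Finset.inter_subset_right hh hhC]
        rfl

section IID

variable {S : Type*} [MeasurableSpace S] {D : Measure S} [IsProbabilityMeasure D]
  {σ : Equiv.Perm ι}

theorem windowAvg_comp_perm (hσ : ∀ i, σ i ∈ W ↔ i ∈ W) (g : (ι → S) → ℝ) (x : ι → S) :
    windowAvg (fun _ => D) W g (fun i => x (σ i)) =
      windowAvg (fun _ => D) W (fun y => g fun i => y (σ i)) x := by
  have hpw : ∀ u : ι → S, W.piecewise (fun i => x (σ i)) (fun i => u (σ i)) =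
      fun i => W.piecewise x u (σ i) := fun u => by
    ext i
    by_cases hi : i ∈ W
    · simp [hi, (hσ i).2 hi]
    · simp [hi, mt (hσ i).1 hi]
  simp only [windowAvg]
  rw [← integral_comp_perm σ]
  simp only [hpw]

theorem integral_windowAvg_mul_windowAvg_comp_perm (hσ : ∀ i, σ i ∈ W ↔ i ∈ W)
    (g h : (ι → S) → ℝ) :
    ∫ x, windowAvg (fun _ => D) W (fun y => g fun i => y (σ i)) x *
        windowAvg (fun _ => D) W (fun y => h fun i => y (σ i)) x ∂(Measure.pi fun _ => D) =
      ∫ x, windowAvg (fun _ => D) W g x * windowAvg (fun _ => D) W h x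
        ∂(Measure.pi fun _ => D) := by
  rw [← integral_comp_perm σ (fun x => windowAvg (fun _ => D) W g x * _)]
  simp only [windowAvg_comp_perm hσ]

end IID

end WindowAverage

open WindowAverage

section Selection

variable {S : Type*} {n : ℕ}

def selIndicator (f : (Fin n → S) → Option (Fin n)) (j : Fin n) (x : Fin n → S) : ℝ :=
  if f x = some j then 1 else 0

variable {f : (Fin n → S) → Option (Fin n)}

theorem selIndicator_nonneg (j : Fin n) (x : Fin n → S) : 0 ≤ selIndicator f j x := by
  unfold selIndicator; split_ifs <;> norm_num

theorem abs_selIndicator_le (j : Fin n) (x : Fin n → S) : |selIndicator f j x| ≤ 1 := by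
  unfold selIndicator; split_ifs <;> norm_num

theorem sum_selIndicator (W : Finset (Fin n)) (x : Fin n → S) :
    ∑ j ∈ W, selIndicator f j x = if ∃ j ∈ W, f x = some j then 1 else 0 := by
  unfold selIndicator
  rcases f x with _ | m <;> simp

theorem sum_univ_selIndicator (x : Fin n → S) :
    ∑ j, selIndicator f j x = {x | f x ≠ none}.indicator 1 x := by
  rw [sum_selIndicator]
  rcases hx : f x with _ | m <;> simp [hx]

theorem selIndicator_comp_perm (hf : PermEquivariant f) (σ : Equiv.Perm (Fin n)) (j : Fin n)
    (x : Fin n → S) : selIndicator f j (fun i => x (σ i)) = selIndicator f (σ j) x := by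
  simp only [selIndicator, hf σ x]
  rcases f x with _ | m
  · simp
  · simp [Equiv.symm_apply_eq]

variable [MeasurableSpace S]

theorem measurable_selIndicator (hf : ∀ o, MeasurableSet {x | f x = o}) (j : Fin n) :
    Measurable (selIndicator f j) :=
  Measurable.ite (hf (some j)) measurable_const measurable_const

noncomputable def windowEstimator (D : Measure S) (f : (Fin n → S) → Option (Fin n))
    (W : Finset (Fin n)) (j : Fin n) : (Fin n → S) → ℝ :=
  windowAvg (fun _ => D) W (selIndicator f j)

variable {D : Measure S}

theorem windowEstimator_nonneg (W : Finset (Fin n)) (j : Fin n) (x : Fin n → S) :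
    0 ≤ windowEstimator D f W j x :=
  integral_nonneg fun _ => selIndicator_nonneg j _

variable [IsProbabilityMeasure D]

theorem integrable_selIndicator (hf : ∀ o, MeasurableSet {x | f x = o}) (j : Fin n) :
    Integrable (selIndicator f j) (Measure.pi fun _ => D) :=
  .of_bound (measurable_selIndicator hf j).aestronglyMeasurable 1
    (ae_of_all _ (abs_selIndicator_le j))

theorem integral_selIndicator_eq (hequiv : PermEquivariant f) (i j : Fin n) :
    ∫ x, selIndicator f i x ∂(Measure.pi fun _ => D) =
      ∫ x, selIndicator f j x ∂(Measure.pi fun _ => D) := by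
  rw [← integral_comp_perm (Equiv.swap i j) (selIndicator f j)]
  simp only [selIndicator_comp_perm hequiv, Equiv.swap_apply_right]

theorem integral_selIndicator (hf : ∀ o, MeasurableSet {x | f x = o})
    (hequiv : PermEquivariant f) (j : Fin n) :
    ∫ x, selIndicator f j x ∂(Measure.pi fun _ => D) =
      ((Measure.pi fun _ => D) {x | f x ≠ none}).toReal / n := by
  have hn : (n : ℝ) ≠ 0 := Nat.cast_ne_zero.2 j.pos.ne'
  have hsome : MeasurableSet {x : Fin n → S | f x ≠ none} := (hf none).compl
  rw [eq_div_iff hn, ← measureReal_def, ← integral_indicator_one hsome]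
  calc (∫ x, selIndicator f j x ∂(Measure.pi fun _ => D)) * n
      = ∑ i, ∫ x, selIndicator f i x ∂(Measure.pi fun _ => D) := by
        simp [integral_selIndicator_eq hequiv _ j, mul_comm]
    _ = ∫ x, {x | f x ≠ none}.indicator 1 x ∂(Measure.pi fun _ => D) := by
        rw [← integral_finsetSum _ fun i _ => integrable_selIndicator hf i]
        simp only [sum_univ_selIndicator]

theorem measurable_windowEstimator (hf : ∀ o, MeasurableSet {x | f x = o}) (W : Finset (Fin n))
    (j : Fin n) : Measurable (windowEstimator D f W j) :=
  measurable_windowAvg (measurable_selIndicator hf j)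

theorem integrable_windowEstimator (hf : ∀ o, MeasurableSet {x | f x = o}) (W : Finset (Fin n))
    (j : Fin n) : Integrable (windowEstimator D f W j) (Measure.pi fun _ => D) :=
  integrable_windowAvg (integrable_selIndicator hf j)

theorem abs_windowEstimator_le (W : Finset (Fin n)) (j : Fin n) (x : Fin n → S) :
    |windowEstimator D f W j x| ≤ 1 :=
  abs_windowAvg_le (abs_selIndicator_le j) x

theorem sum_windowEstimator_le_one (hf : ∀ o, MeasurableSet {x | f x = o}) (W : Finset (Fin n))
    (x : Fin n → S) : ∑ j, windowEstimator D f W j x ≤ 1 := by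
  unfold windowEstimator
  rw [← windowAvg_finsetSum (fun j _ => measurable_selIndicator hf j)
    fun j _ => abs_selIndicator_le j]
  refine (le_abs_self _).trans (abs_windowAvg_le (fun y => ?_) x)
  rw [sum_selIndicator]
  split_ifs <;> norm_num

theorem integral_Xwin_mul_Xwin (hf : ∀ o, MeasurableSet {x | f x = o}) (j k : Fin n)
    (A B : Finset (Fin n)) :
    ∫ x, Xwin D n f j A x * Xwin D n f k B x ∂(Measure.pi fun _ => D) =
      ∫ x, windowEstimator D f (A ∩ B) j x * windowEstimator D f (A ∩ B) k x
        ∂(Measure.pi fun _ => D) :=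
  -- `windowSigma n A` is definitionally `cylinderEvents ↑A`.
  (integral_congr_ae ((condExp_cylinderEvents_ae_eq_windowAvg (measurable_selIndicator hf j)
    (integrable_selIndicator hf j)).mul (condExp_cylinderEvents_ae_eq_windowAvg
      (measurable_selIndicator hf k) (integrable_selIndicator hf k)))).trans
    (integral_windowAvg_mul_windowAvg_eq_inter (measurable_selIndicator hf j)
      (abs_selIndicator_le j) (measurable_selIndicator hf k) (abs_selIndicator_le k))

theorem Qwin_ae_eq_sum_windowEstimator (hf : ∀ o, MeasurableSet {x | f x = o})
    (W : Finset (Fin n)) :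
    Qwin D n f W =ᵐ[Measure.pi fun _ => D] fun x => ∑ j ∈ W, windowEstimator D f W j x := by
  have hsum : (fun x => if ∃ j ∈ W, f x = some j then (1 : ℝ) else 0) =
      fun x => ∑ j ∈ W, selIndicator f j x := funext fun x => (sum_selIndicator W x).symm
  rw [Qwin, hsum]
  exact (condExp_cylinderEvents_ae_eq_windowAvg
    (Finset.measurable_sum W fun j _ => measurable_selIndicator hf j)
    (integrable_finsetSum W fun j _ => integrable_selIndicator hf j)).trans
    (ae_of_all _ (windowAvg_finsetSum (fun j _ => measurable_selIndicator hf j)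
      fun j _ => abs_selIndicator_le j))

theorem integral_Qwin_mul_one_sub_Qwin (hf : ∀ o, MeasurableSet {x | f x = o})
    (W : Finset (Fin n)) :
    ∫ x, Qwin D n f W x * (1 - Qwin D n f W x) ∂(Measure.pi fun _ => D) =
      ∫ x, (∑ j ∈ W, windowEstimator D f W j x) * (1 - ∑ j ∈ W, windowEstimator D f W j x)
        ∂(Measure.pi fun _ => D) :=
  have hQ := Qwin_ae_eq_sum_windowEstimator hf W
  integral_congr_ae (hQ.mul ((Filter.EventuallyEq.refl _ _).sub hQ))

theorem windowEstimator_empty (hf : ∀ o, MeasurableSet {x | f x = o})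
    (hequiv : PermEquivariant f) (j : Fin n) (x : Fin n → S) :
    windowEstimator D f ∅ j x = ((Measure.pi fun _ => D) {x | f x ≠ none}).toReal / n :=
  (windowAvg_empty _ _ x).trans (integral_selIndicator hf hequiv j)

theorem integral_windowEstimator_mul_eq (hequiv : PermEquivariant f) {W : Finset (Fin n)}
    {j j' k k' : Fin n} (hj : j ∈ W) (hj' : j' ∈ W) (hk : k ∉ W) (hk' : k' ∉ W) :
    ∫ x, windowEstimator D f W j' x * windowEstimator D f W k' x ∂(Measure.pi fun _ => D) =
      ∫ x, windowEstimator D f W j x * windowEstimator D f W k x ∂(Measure.pi fun _ => D) := by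
  obtain ⟨σ, hσW, rfl, rfl⟩ := exists_perm_mem_iff_apply_eq hj hj' hk hk'
  unfold windowEstimator
  rw [← integral_windowAvg_mul_windowAvg_comp_perm hσW]
  simp only [selIndicator_comp_perm hequiv]

theorem card_mul_card_mul_integral_windowEstimator_le (hf : ∀ o, MeasurableSet {x | f x = o})
    (hequiv : PermEquivariant f) {W : Finset (Fin n)} {j k : Fin n} (hj : j ∈ W) (hk : k ∉ W) :
    (W.card * (n - W.card) : ℝ) *
        ∫ x, windowEstimator D f W j x * windowEstimator D f W k x ∂(Measure.pi fun _ => D) ≤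
      ∫ x, (∑ i ∈ W, windowEstimator D f W i x) * (1 - ∑ i ∈ W, windowEstimator D f W i x)
        ∂(Measure.pi fun _ => D) := by
  have hpair : ∀ i i', Integrable (fun x => windowEstimator D f W i x *
      windowEstimator D f W i' x) (Measure.pi fun _ => D) := fun i i' =>
    (integrable_windowEstimator hf W i).mul_bdd
      (measurable_windowEstimator hf W i').aestronglyMeasurable
      (ae_of_all _ (abs_windowEstimator_le W i'))
  set Q := fun x => ∑ i ∈ W, windowEstimator D f W i x
  have hQ : ∀ x, 0 ≤ Q x ∧ Q x ≤ 1 := fun x =>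
    ⟨Finset.sum_nonneg fun i _ => windowEstimator_nonneg W i x,
      (Finset.sum_le_sum_of_subset_of_nonneg (Finset.subset_univ W)
        fun i _ _ => windowEstimator_nonneg W i x).trans (sum_windowEstimator_le_one hf W x)⟩
  have hQQ : Integrable (fun x => Q x * (1 - Q x)) (Measure.pi fun _ => D) :=
    (integrable_finsetSum W fun i _ => integrable_windowEstimator hf W i).mul_bdd (c := 1)
      (measurable_const.sub (Finset.measurable_sum W fun i _ =>
        measurable_windowEstimator hf W i)).aestronglyMeasurable
      (ae_of_all _ fun x => abs_le.2 ⟨by linarith [hQ x], by linarith [hQ x]⟩)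
  have hcard : (n - W.card : ℝ) = Wᶜ.card := by
    rw [Finset.card_compl, Fintype.card_fin, Nat.cast_sub (by simpa using W.card_le_univ)]
  calc (W.card * (n - W.card) : ℝ) *
        ∫ x, windowEstimator D f W j x * windowEstimator D f W k x ∂(Measure.pi fun _ => D)
      = ∑ i ∈ W, ∑ i' ∈ Wᶜ,
          ∫ x, windowEstimator D f W i x * windowEstimator D f W i' x ∂(Measure.pi fun _ => D) := by
        rw [Finset.sum_congr rfl fun i hi => Finset.sum_congr rfl fun i' hi' =>
          integral_windowEstimator_mul_eq hequiv hj hi hk (Finset.mem_compl.1 hi'), hcard]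
        simp [mul_assoc]
    _ = ∫ x, Q x * ∑ i ∈ Wᶜ, windowEstimator D f W i x ∂(Measure.pi fun _ => D) := by
        simp only [Q, Finset.sum_mul_sum]
        rw [integral_finsetSum _ fun i _ => integrable_finsetSum _ fun i' _ => hpair i i']
        exact Finset.sum_congr rfl fun i _ => (integral_finsetSum _ fun i' _ => hpair i i').symm
    _ ≤ ∫ x, Q x * (1 - Q x) ∂(Measure.pi fun _ => D) :=
        integral_mono_of_nonneg (ae_of_all _ fun x => mul_nonneg (hQ x).1
          (Finset.sum_nonneg fun i _ => windowEstimator_nonneg W i x)) hQQ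
          (ae_of_all _ fun x => sum_mul_sum_compl_le W (windowEstimator_nonneg W · x)
            (sum_windowEstimator_le_one hf W x))

end Selection

theorem windowed_estimator_cross_term_general
    {S : Type*} [MeasurableSpace S] (n : ℕ)
    (D : Measure S) [IsProbabilityMeasure D]
    (f : (Fin n → S) → Option (Fin n))
    (hfmeas : ∀ o : Option (Fin n), MeasurableSet {s : Fin n → S | f s = o})
    (hequiv : PermEquivariant f)
    (j k : Fin n)
    (A B W : Finset (Fin n)) (hW : W = A ∩ B) :
    ((j ∈ W → k ∉ W → 1 ≤ W.card →
      ∫ s, Xwin D n f j A s * Xwin D n f k B s ∂(Measure.pi fun _ : Fin n => D)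
        ≤ (∫ s, Qwin D n f W s * (1 - Qwin D n f W s) ∂(Measure.pi fun _ : Fin n => D))
            / (W.card * ((n : ℝ) - W.card))) ∧
     (W = ∅ →
      ∫ s, Xwin D n f j A s * Xwin D n f k B s ∂(Measure.pi fun _ : Fin n => D)
        = ((Measure.pi (fun _ : Fin n => D)) {s | f s ≠ none}).toReal ^ 2 / n ^ 2)) := by
  have hcross := integral_Xwin_mul_Xwin (D := D) hfmeas j k A B
  rw [← hW] at hcross
  refine ⟨fun hjW hkW _ => ?_, fun hW0 => ?_⟩
  · have hpos : 0 < (W.card : ℝ) * (n - W.card) :=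
      mul_pos (Nat.cast_pos.2 (Finset.card_pos.2 ⟨j, hjW⟩))
        (sub_pos.2 (Nat.cast_lt.2 (by simpa using Finset.card_lt_univ_of_notMem hkW)))
    rw [hcross, integral_Qwin_mul_one_sub_Qwin hfmeas, le_div_iff₀ hpos, mul_comm]
    exact card_mul_card_mul_integral_windowEstimator_le hfmeas hequiv hjW hkW
  · simp only [hcross, hW0, windowEstimator_empty hfmeas hequiv, integral_const, probReal_univ,
      one_smul]
    ring

/-- Lemma 5.4 (abstracted): cross-term bound for the windowed estimators of two distinct
vertices `j ∈ A`, `k ∈ B` with `W = A ∩ B`.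
(i) If `j ∈ W`, `k ∉ W` and `|W| = ℓ ≥ 1`, then
`E[X_j^A · X_k^B] ≤ E[Q_W(1 − Q_W)] / (ℓ(n−ℓ))`.
(ii) If `W = ∅`, then `E[X_j^A · X_k^B] = μ²/n²` where `μ = P[f(t) ≠ ⊥]`. -/
theorem windowed_estimator_cross_term
    {S : Type*} [MeasurableSpace S] (n : ℕ)
    (D : Measure S) [IsProbabilityMeasure D]
    (f : (Fin n → S) → Option (Fin n))
    (hfmeas : ∀ o : Option (Fin n), MeasurableSet {s : Fin n → S | f s = o})
    (hequiv : PermEquivariant f)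
    (j k : Fin n) (hjk : j ≠ k)
    (A B W : Finset (Fin n)) (hjA : j ∈ A) (hkB : k ∈ B) (hW : W = A ∩ B) :
    ((j ∈ W → k ∉ W → 1 ≤ W.card →
      ∫ s, Xwin D n f j A s * Xwin D n f k B s ∂(Measure.pi fun _ : Fin n => D)
        ≤ (∫ s, Qwin D n f W s * (1 - Qwin D n f W s) ∂(Measure.pi fun _ : Fin n => D))
            / (W.card * ((n : ℝ) - W.card))) ∧
     (W = ∅ →
      ∫ s, Xwin D n f j A s * Xwin D n f k B s ∂(Measure.pi fun _ : Fin n => D)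
        = ((Measure.pi (fun _ : Fin n => D)) {s | f s ≠ none}).toReal ^ 2 / n ^ 2)) :=
  windowed_estimator_cross_term_general n D f hfmeas hequiv j k A B W hW
end

section
/- Let f : ℝ → ℝ be a concave function, let c, x ∈ ℝ with x ≥ 0 and f(c) ≥ 0, and let a, b be reals with 0 < a ≤ b. Then a·f(c + x/a) ≤ b·f(c + x/b). -/
/-- Scaling inequality for concave functions (used in the proof of Lemma 6.3):
if `f` is concave, `x ≥ 0`, `f c ≥ 0` and `0 < a ≤ b`, then `a·f(c + x/a) ≤ b·f(c + x/b)`. -/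
theorem concave_scaling (f : ℝ → ℝ) (hf : ConcaveOn ℝ Set.univ f)
    (c x : ℝ) (hx : 0 ≤ x) (hfc : 0 ≤ f c) (a b : ℝ) (ha : 0 < a) (hab : a ≤ b) :
    a * f (c + x / a) ≤ b * f (c + x / b) := by
  have hb : 0 < b := lt_of_lt_of_le ha hab
  have ht : 0 ≤ a / b := div_nonneg ha.le hb.le
  have ht1 : a / b ≤ 1 := (div_le_one hb).2 hab
  have hsum : a / b + (1 - a / b) = 1 := by ring
  have key := hf.2 (Set.mem_univ (c + x / a)) (Set.mem_univ c) ht (by linarith) hsum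
  have heq : (a / b) • (c + x / a) + (1 - a / b) • c = c + x / b := by
    simp only [smul_eq_mul]
    field_simp
    ring
  rw [heq] at key
  simp only [smul_eq_mul] at key
  have : a / b * f (c + x / a) ≤ f (c + x / b) := by
    nlinarith [mul_nonneg (by linarith : (0:ℝ) ≤ 1 - a / b) hfc]
  calc a * f (c + x / a) = b * (a / b * f (c + x / a)) := by field_simp
    _ ≤ b * f (c + x / b) := by nlinarith
end

section
/- For every real y ≥ 0: y − 0.3·y² ≤ 1 − exp(−(y + (1/2)·y² + ((4 − 2√3)/3)·y³)). -/
lemma cubic_le_exp_s13 {t : ℝ} (ht : 0 ≤ t) : 1 + t + t^2/2 + t^3/6 ≤ Real.exp t := by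
  have h := Real.sum_le_exp_of_nonneg ht 4
  simp [Finset.sum_range_succ, Nat.factorial] at h
  nlinarith [h]

/-- Quadratic lower bound on `p(y)` used in Lemma 3.1(b) for `μ ≤ 0.4`. -/
theorem quad_lower_bound_b_small (y : ℝ) (hy : 0 ≤ y) :
    y - 0.3 * y^2 ≤ 1 - Real.exp (-(y + (1/2) * y^2 + ((4 - 2 * Real.sqrt 3) / 3) * y^3)) := by
  set t : ℝ := y + y^2/2 with hts
  have ht : 0 ≤ t := by positivity
  have hsqrt : Real.sqrt 3 ≤ 2 := by
    rw [show (2:ℝ) = Real.sqrt 4 by rw [show (4:ℝ) = 2^2 by norm_num, Real.sqrt_sq]; norm_num]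
    exact Real.sqrt_le_sqrt (by norm_num)
  have hc : 0 ≤ (4 - 2 * Real.sqrt 3) / 3 := by linarith
  have h1 : Real.exp (-(y + (1/2) * y^2 + ((4 - 2 * Real.sqrt 3) / 3) * y^3)) ≤ Real.exp (-t) := by
    apply Real.exp_le_exp.mpr
    have : 0 ≤ ((4 - 2 * Real.sqrt 3) / 3) * y^3 := by positivity
    simp only [hts]; linarith
  have hS : 1 + t + t^2/2 + t^3/6 ≤ Real.exp t := cubic_le_exp_s13 ht
  have hSpos : (0:ℝ) < 1 + t + t^2/2 + t^3/6 := by positivity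
  have hPpos : (0:ℝ) < 1 - y + 0.3 * y^2 := by nlinarith [sq_nonneg (y - 5/3)]
  have hkey : 1 ≤ (1 - y + 0.3 * y^2) * (1 + t + t^2/2 + t^3/6) := by
    simp only [hts]
    nlinarith [sq_nonneg y, sq_nonneg (y-1), pow_nonneg hy 3, pow_nonneg hy 4,
      pow_nonneg hy 5, pow_nonneg hy 6, sq_nonneg (y^2 - y), sq_nonneg (y^3 - y^2),
      sq_nonneg (y^3 - 2*y^2), sq_nonneg (y^2 - 3*y), mul_nonneg (pow_nonneg hy 4) (sq_nonneg (y-1))]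
  have h2 : Real.exp (-t) ≤ 1 - y + 0.3 * y^2 := by
    rw [Real.exp_neg]
    rw [inv_le_iff_one_le_mul₀ (Real.exp_pos t)]
    calc (1:ℝ) ≤ (1 - y + 0.3 * y^2) * (1 + t + t^2/2 + t^3/6) := hkey
      _ ≤ (1 - y + 0.3 * y^2) * Real.exp t := by
          exact mul_le_mul_of_nonneg_left hS hPpos.le
  linarith [h1.trans h2]
end

section
/- For every real y ≥ 0: 1.1108·y − 0.3099·y² − 0.0113 ≤ 1 − exp(−(y + (1/2)·y² + ((4 − 2√3)/3)·y³)). -/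
set_option maxHeartbeats 1000000

open Finset in
lemma exp_neg_le_of_sum {x B : ℝ} (hx : 0 ≤ x) (n : ℕ)
    (hS0 : 0 < ∑ i ∈ range n, x ^ i / i.factorial)
    (hB : 1 ≤ B * ∑ i ∈ range n, x ^ i / i.factorial) :
    Real.exp (-x) ≤ B := by
  have hS := Real.sum_le_exp_of_nonneg hx n
  have hex := Real.exp_pos x
  rw [Real.exp_neg]
  rw [inv_le_iff_one_le_mul₀ hex]
  calc (1:ℝ) ≤ B * ∑ i ∈ range n, x ^ i / i.factorial := hB
    _ ≤ B * Real.exp x := by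
        apply mul_le_mul_of_nonneg_left hS
        nlinarith

lemma exp_neg_le_quad {d : ℝ} (hd : 0 ≤ d) : Real.exp (-d) ≤ 1 - d + d^2/2 := by
  have hT : 1 + d + d^2/2 + d^3/6 ≤ Real.exp d := by
    have := Real.sum_le_exp_of_nonneg hd 4
    simp only [Finset.sum_range_succ, Finset.sum_range_zero, Nat.factorial] at this
    push_cast at this
    nlinarith [this]
  have hpos : (0:ℝ) < 1 + d + d^2/2 + d^3/6 := by positivity
  have h1 : Real.exp (-d) * (1 + d + d^2/2 + d^3/6) ≤ 1 := by
    rw [Real.exp_neg, inv_mul_le_iff₀ (Real.exp_pos d)]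
    nlinarith [hT]
  nlinarith [h1, hpos, Real.exp_pos (-d), sq_nonneg d, pow_nonneg hd 3, pow_nonneg hd 5, sq_nonneg (d*d)]

lemma aux_iv_0 (y : ℝ) (hy : 0 ≤ y) (h1 : (1/100 : ℝ) ≤ y) (h2 : y ≤ (4/25 : ℝ)) :
    Real.exp (-(y + y^2/2 + 0.1786*y^3)) ≤ 1 - (1.1108 * y - 0.3099 * y^2 - 0.0113) := by
  have hE : Real.exp (-(50250893/5000000000 : ℝ)) ≤ (2475001/2500000 : ℝ) := by
    apply exp_neg_le_of_sum (by norm_num) 3 <;>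
      norm_num [Finset.sum_range_succ, Nat.factorial]
  have hd : (0:ℝ) ≤ (y + y^2/2 + 0.1786*y^3) - (50250893/5000000000 : ℝ) := by nlinarith [h1, hy]
  have hq : Real.exp (-(y + y^2/2 + 0.1786*y^3)) ≤ (2475001/2500000 : ℝ) * (1 - ((y + y^2/2 + 0.1786*y^3) - (50250893/5000000000 : ℝ)) + ((y + y^2/2 + 0.1786*y^3) - (50250893/5000000000 : ℝ))^2/2) := by
    have hsplit : -(y + y^2/2 + 0.1786*y^3) = -(50250893/5000000000 : ℝ) + -((y + y^2/2 + 0.1786*y^3) - (50250893/5000000000 : ℝ)) := by ring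
    rw [hsplit, Real.exp_add]
    exact mul_le_mul hE (exp_neg_le_quad hd) (Real.exp_pos _).le (by norm_num)
  nlinarith [hq, mul_nonneg (by linarith : (0:ℝ) ≤ y - (1/100 : ℝ)) (by linarith : (0:ℝ) ≤ (4/25 : ℝ) - y), sq_nonneg (y - (17/200 : ℝ)), sq_nonneg (y^2 - (289/40000 : ℝ)), mul_nonneg (mul_nonneg (by linarith : (0:ℝ) ≤ y - (1/100 : ℝ)) (by linarith : (0:ℝ) ≤ (4/25 : ℝ) - y)) (sq_nonneg (y - (17/200 : ℝ))), sq_nonneg (y*y - (17/200 : ℝ)*y), pow_nonneg hy 3]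

lemma aux_iv_1 (y : ℝ) (hy : 0 ≤ y) (h1 : (4/25 : ℝ) ≤ y) (h2 : y ≤ (21/100 : ℝ)) :
    Real.exp (-(y + y^2/2 + 0.1786*y^3)) ≤ 1 - (1.1108 * y - 0.3099 * y^2 - 0.0113) := by
  have hE : Real.exp (-(1694644/9765625 : ℝ)) ≤ (8407183/10000000 : ℝ) := by
    apply exp_neg_le_of_sum (by norm_num) 4 <;>
      norm_num [Finset.sum_range_succ, Nat.factorial]
  have hd : (0:ℝ) ≤ (y + y^2/2 + 0.1786*y^3) - (1694644/9765625 : ℝ) := by nlinarith [h1, hy]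
  have hq : Real.exp (-(y + y^2/2 + 0.1786*y^3)) ≤ (8407183/10000000 : ℝ) * (1 - ((y + y^2/2 + 0.1786*y^3) - (1694644/9765625 : ℝ)) + ((y + y^2/2 + 0.1786*y^3) - (1694644/9765625 : ℝ))^2/2) := by
    have hsplit : -(y + y^2/2 + 0.1786*y^3) = -(1694644/9765625 : ℝ) + -((y + y^2/2 + 0.1786*y^3) - (1694644/9765625 : ℝ)) := by ring
    rw [hsplit, Real.exp_add]
    exact mul_le_mul hE (exp_neg_le_quad hd) (Real.exp_pos _).le (by norm_num)
  nlinarith [hq, mul_nonneg (by linarith : (0:ℝ) ≤ y - (4/25 : ℝ)) (by linarith : (0:ℝ) ≤ (21/100 : ℝ) - y), sq_nonneg (y - (37/200 : ℝ)), sq_nonneg (y^2 - (1369/40000 : ℝ)), mul_nonneg (mul_nonneg (by linarith : (0:ℝ) ≤ y - (4/25 : ℝ)) (by linarith : (0:ℝ) ≤ (21/100 : ℝ) - y)) (sq_nonneg (y - (37/200 : ℝ))), sq_nonneg (y*y - (37/200 : ℝ)*y), pow_nonneg hy 3]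

lemma aux_iv_2 (y : ℝ) (hy : 0 ≤ y) (h1 : (21/100 : ℝ) ≤ y) (h2 : y ≤ (13/25 : ℝ)) :
    Real.exp (-(y + y^2/2 + 0.1786*y^3)) ≤ 1 - (1.1108 * y - 0.3099 * y^2 - 0.0113) := by
  have hE : Real.exp (-(1168520073/5000000000 : ℝ)) ≤ (7915999/10000000 : ℝ) := by
    apply exp_neg_le_of_sum (by norm_num) 5 <;>
      norm_num [Finset.sum_range_succ, Nat.factorial]
  have hd : (0:ℝ) ≤ (y + y^2/2 + 0.1786*y^3) - (1168520073/5000000000 : ℝ) := by nlinarith [h1, hy]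
  have hq : Real.exp (-(y + y^2/2 + 0.1786*y^3)) ≤ (7915999/10000000 : ℝ) * (1 - ((y + y^2/2 + 0.1786*y^3) - (1168520073/5000000000 : ℝ)) + ((y + y^2/2 + 0.1786*y^3) - (1168520073/5000000000 : ℝ))^2/2) := by
    have hsplit : -(y + y^2/2 + 0.1786*y^3) = -(1168520073/5000000000 : ℝ) + -((y + y^2/2 + 0.1786*y^3) - (1168520073/5000000000 : ℝ)) := by ring
    rw [hsplit, Real.exp_add]
    exact mul_le_mul hE (exp_neg_le_quad hd) (Real.exp_pos _).le (by norm_num)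
  nlinarith [hq, mul_nonneg (by linarith : (0:ℝ) ≤ y - (21/100 : ℝ)) (by linarith : (0:ℝ) ≤ (13/25 : ℝ) - y), sq_nonneg (y - (73/200 : ℝ)), sq_nonneg (y^2 - (5329/40000 : ℝ)), mul_nonneg (mul_nonneg (by linarith : (0:ℝ) ≤ y - (21/100 : ℝ)) (by linarith : (0:ℝ) ≤ (13/25 : ℝ) - y)) (sq_nonneg (y - (73/200 : ℝ))), sq_nonneg (y*y - (73/200 : ℝ)*y), pow_nonneg hy 3]

lemma aux_iv_3 (y : ℝ) (hy : 0 ≤ y) (h1 : (13/25 : ℝ) ≤ y) (h2 : y ≤ (87/100 : ℝ)) :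
    Real.exp (-(y + y^2/2 + 0.1786*y^3)) ≤ 1 - (1.1108 * y - 0.3099 * y^2 - 0.0113) := by
  have hE : Real.exp (-(53149421/78125000 : ℝ)) ≤ (40517/80000 : ℝ) := by
    apply exp_neg_le_of_sum (by norm_num) 7 <;>
      norm_num [Finset.sum_range_succ, Nat.factorial]
  have hd : (0:ℝ) ≤ (y + y^2/2 + 0.1786*y^3) - (53149421/78125000 : ℝ) := by nlinarith [h1, hy]
  have hq : Real.exp (-(y + y^2/2 + 0.1786*y^3)) ≤ (40517/80000 : ℝ) * (1 - ((y + y^2/2 + 0.1786*y^3) - (53149421/78125000 : ℝ)) + ((y + y^2/2 + 0.1786*y^3) - (53149421/78125000 : ℝ))^2/2) := by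
    have hsplit : -(y + y^2/2 + 0.1786*y^3) = -(53149421/78125000 : ℝ) + -((y + y^2/2 + 0.1786*y^3) - (53149421/78125000 : ℝ)) := by ring
    rw [hsplit, Real.exp_add]
    exact mul_le_mul hE (exp_neg_le_quad hd) (Real.exp_pos _).le (by norm_num)
  nlinarith [hq, mul_nonneg (by linarith : (0:ℝ) ≤ y - (13/25 : ℝ)) (by linarith : (0:ℝ) ≤ (87/100 : ℝ) - y), sq_nonneg (y - (139/200 : ℝ)), sq_nonneg (y^2 - (19321/40000 : ℝ)), mul_nonneg (mul_nonneg (by linarith : (0:ℝ) ≤ y - (13/25 : ℝ)) (by linarith : (0:ℝ) ≤ (87/100 : ℝ) - y)) (sq_nonneg (y - (139/200 : ℝ))), sq_nonneg (y*y - (139/200 : ℝ)*y), pow_nonneg hy 3]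

lemma aux_iv_4 (y : ℝ) (hy : 0 ≤ y) (h1 : (87/100 : ℝ) ≤ y) (h2 : y ≤ (117/100 : ℝ)) :
    Real.exp (-(y + y^2/2 + 0.1786*y^3)) ≤ 1 - (1.1108 * y - 0.3099 * y^2 - 0.0113) := by
  have hE : Real.exp (-(6830293179/5000000000 : ℝ)) ≤ (2551139/10000000 : ℝ) := by
    apply exp_neg_le_of_sum (by norm_num) 9 <;>
      norm_num [Finset.sum_range_succ, Nat.factorial]
  have hd : (0:ℝ) ≤ (y + y^2/2 + 0.1786*y^3) - (6830293179/5000000000 : ℝ) := by nlinarith [h1, hy]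
  have hq : Real.exp (-(y + y^2/2 + 0.1786*y^3)) ≤ (2551139/10000000 : ℝ) * (1 - ((y + y^2/2 + 0.1786*y^3) - (6830293179/5000000000 : ℝ)) + ((y + y^2/2 + 0.1786*y^3) - (6830293179/5000000000 : ℝ))^2/2) := by
    have hsplit : -(y + y^2/2 + 0.1786*y^3) = -(6830293179/5000000000 : ℝ) + -((y + y^2/2 + 0.1786*y^3) - (6830293179/5000000000 : ℝ)) := by ring
    rw [hsplit, Real.exp_add]
    exact mul_le_mul hE (exp_neg_le_quad hd) (Real.exp_pos _).le (by norm_num)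
  nlinarith [hq, mul_nonneg (by linarith : (0:ℝ) ≤ y - (87/100 : ℝ)) (by linarith : (0:ℝ) ≤ (117/100 : ℝ) - y), sq_nonneg (y - (51/50 : ℝ)), sq_nonneg (y^2 - (2601/2500 : ℝ)), mul_nonneg (mul_nonneg (by linarith : (0:ℝ) ≤ y - (87/100 : ℝ)) (by linarith : (0:ℝ) ≤ (117/100 : ℝ) - y)) (sq_nonneg (y - (51/50 : ℝ))), sq_nonneg (y*y - (51/50 : ℝ)*y), pow_nonneg hy 3]

lemma aux_iv_5 (y : ℝ) (hy : 0 ≤ y) (h1 : (117/100 : ℝ) ≤ y) (h2 : y ≤ (7/5 : ℝ)) :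
    Real.exp (-(y + y^2/2 + 0.1786*y^3)) ≤ 1 - (1.1108 * y - 0.3099 * y^2 - 0.0113) := by
  have hE : Real.exp (-(10702490409/5000000000 : ℝ)) ≤ (1175981/10000000 : ℝ) := by
    apply exp_neg_le_of_sum (by norm_num) 11 <;>
      norm_num [Finset.sum_range_succ, Nat.factorial]
  have hd : (0:ℝ) ≤ (y + y^2/2 + 0.1786*y^3) - (10702490409/5000000000 : ℝ) := by nlinarith [h1, hy]
  have hq : Real.exp (-(y + y^2/2 + 0.1786*y^3)) ≤ (1175981/10000000 : ℝ) * (1 - ((y + y^2/2 + 0.1786*y^3) - (10702490409/5000000000 : ℝ)) + ((y + y^2/2 + 0.1786*y^3) - (10702490409/5000000000 : ℝ))^2/2) := by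
    have hsplit : -(y + y^2/2 + 0.1786*y^3) = -(10702490409/5000000000 : ℝ) + -((y + y^2/2 + 0.1786*y^3) - (10702490409/5000000000 : ℝ)) := by ring
    rw [hsplit, Real.exp_add]
    exact mul_le_mul hE (exp_neg_le_quad hd) (Real.exp_pos _).le (by norm_num)
  nlinarith [hq, mul_nonneg (by linarith : (0:ℝ) ≤ y - (117/100 : ℝ)) (by linarith : (0:ℝ) ≤ (7/5 : ℝ) - y), sq_nonneg (y - (257/200 : ℝ)), sq_nonneg (y^2 - (66049/40000 : ℝ)), mul_nonneg (mul_nonneg (by linarith : (0:ℝ) ≤ y - (117/100 : ℝ)) (by linarith : (0:ℝ) ≤ (7/5 : ℝ) - y)) (sq_nonneg (y - (257/200 : ℝ))), sq_nonneg (y*y - (257/200 : ℝ)*y), pow_nonneg hy 3]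

lemma aux_iv_6 (y : ℝ) (hy : 0 ≤ y) (h1 : (7/5 : ℝ) ≤ y) (h2 : y ≤ (77/50 : ℝ)) :
    Real.exp (-(y + y^2/2 + 0.1786*y^3)) ≤ 1 - (1.1108 * y - 0.3099 * y^2 - 0.0113) := by
  have hE : Real.exp (-(1793799/625000 : ℝ)) ≤ (141743/2500000 : ℝ) := by
    apply exp_neg_le_of_sum (by norm_num) 12 <;>
      norm_num [Finset.sum_range_succ, Nat.factorial]
  have hd : (0:ℝ) ≤ (y + y^2/2 + 0.1786*y^3) - (1793799/625000 : ℝ) := by nlinarith [h1, hy]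
  have hq : Real.exp (-(y + y^2/2 + 0.1786*y^3)) ≤ (141743/2500000 : ℝ) * (1 - ((y + y^2/2 + 0.1786*y^3) - (1793799/625000 : ℝ)) + ((y + y^2/2 + 0.1786*y^3) - (1793799/625000 : ℝ))^2/2) := by
    have hsplit : -(y + y^2/2 + 0.1786*y^3) = -(1793799/625000 : ℝ) + -((y + y^2/2 + 0.1786*y^3) - (1793799/625000 : ℝ)) := by ring
    rw [hsplit, Real.exp_add]
    exact mul_le_mul hE (exp_neg_le_quad hd) (Real.exp_pos _).le (by norm_num)
  nlinarith [hq, mul_nonneg (by linarith : (0:ℝ) ≤ y - (7/5 : ℝ)) (by linarith : (0:ℝ) ≤ (77/50 : ℝ) - y), sq_nonneg (y - (147/100 : ℝ)), sq_nonneg (y^2 - (21609/10000 : ℝ)), mul_nonneg (mul_nonneg (by linarith : (0:ℝ) ≤ y - (7/5 : ℝ)) (by linarith : (0:ℝ) ≤ (77/50 : ℝ) - y)) (sq_nonneg (y - (147/100 : ℝ))), sq_nonneg (y*y - (147/100 : ℝ)*y), pow_nonneg hy 3]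

lemma aux_iv_7 (y : ℝ) (hy : 0 ≤ y) (h1 : (77/50 : ℝ) ≤ y) (h2 : y ≤ (161/100 : ℝ)) :
    Real.exp (-(y + y^2/2 + 0.1786*y^3)) ≤ 1 - (1.1108 * y - 0.3099 * y^2 - 0.0113) := by
  have hE : Real.exp (-(2111308969/625000000 : ℝ)) ≤ (341129/10000000 : ℝ) := by
    apply exp_neg_le_of_sum (by norm_num) 14 <;>
      norm_num [Finset.sum_range_succ, Nat.factorial]
  have hd : (0:ℝ) ≤ (y + y^2/2 + 0.1786*y^3) - (2111308969/625000000 : ℝ) := by nlinarith [h1, hy]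
  have hq : Real.exp (-(y + y^2/2 + 0.1786*y^3)) ≤ (341129/10000000 : ℝ) * (1 - ((y + y^2/2 + 0.1786*y^3) - (2111308969/625000000 : ℝ)) + ((y + y^2/2 + 0.1786*y^3) - (2111308969/625000000 : ℝ))^2/2) := by
    have hsplit : -(y + y^2/2 + 0.1786*y^3) = -(2111308969/625000000 : ℝ) + -((y + y^2/2 + 0.1786*y^3) - (2111308969/625000000 : ℝ)) := by ring
    rw [hsplit, Real.exp_add]
    exact mul_le_mul hE (exp_neg_le_quad hd) (Real.exp_pos _).le (by norm_num)
  nlinarith [hq, mul_nonneg (by linarith : (0:ℝ) ≤ y - (77/50 : ℝ)) (by linarith : (0:ℝ) ≤ (161/100 : ℝ) - y), sq_nonneg (y - (63/40 : ℝ)), sq_nonneg (y^2 - (3969/1600 : ℝ)), mul_nonneg (mul_nonneg (by linarith : (0:ℝ) ≤ y - (77/50 : ℝ)) (by linarith : (0:ℝ) ≤ (161/100 : ℝ) - y)) (sq_nonneg (y - (63/40 : ℝ))), sq_nonneg (y*y - (63/40 : ℝ)*y), pow_nonneg hy 3]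

lemma aux_iv_8 (y : ℝ) (hy : 0 ≤ y) (h1 : (161/100 : ℝ) ≤ y) (h2 : y ≤ (173/100 : ℝ)) :
    Real.exp (-(y + y^2/2 + 0.1786*y^3)) ≤ 1 - (1.1108 * y - 0.3099 * y^2 - 0.0113) := by
  have hE : Real.exp (-(18256989933/5000000000 : ℝ)) ≤ (64889/2500000 : ℝ) := by
    apply exp_neg_le_of_sum (by norm_num) 14 <;>
      norm_num [Finset.sum_range_succ, Nat.factorial]
  have hd : (0:ℝ) ≤ (y + y^2/2 + 0.1786*y^3) - (18256989933/5000000000 : ℝ) := by nlinarith [h1, hy]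
  have hq : Real.exp (-(y + y^2/2 + 0.1786*y^3)) ≤ (64889/2500000 : ℝ) * (1 - ((y + y^2/2 + 0.1786*y^3) - (18256989933/5000000000 : ℝ)) + ((y + y^2/2 + 0.1786*y^3) - (18256989933/5000000000 : ℝ))^2/2) := by
    have hsplit : -(y + y^2/2 + 0.1786*y^3) = -(18256989933/5000000000 : ℝ) + -((y + y^2/2 + 0.1786*y^3) - (18256989933/5000000000 : ℝ)) := by ring
    rw [hsplit, Real.exp_add]
    exact mul_le_mul hE (exp_neg_le_quad hd) (Real.exp_pos _).le (by norm_num)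
  nlinarith [hq, mul_nonneg (by linarith : (0:ℝ) ≤ y - (161/100 : ℝ)) (by linarith : (0:ℝ) ≤ (173/100 : ℝ) - y), sq_nonneg (y - (167/100 : ℝ)), sq_nonneg (y^2 - (27889/10000 : ℝ)), mul_nonneg (mul_nonneg (by linarith : (0:ℝ) ≤ y - (161/100 : ℝ)) (by linarith : (0:ℝ) ≤ (173/100 : ℝ) - y)) (sq_nonneg (y - (167/100 : ℝ))), sq_nonneg (y*y - (167/100 : ℝ)*y), pow_nonneg hy 3]

lemma aux_iv_9 (y : ℝ) (hy : 0 ≤ y) (h1 : (173/100 : ℝ) ≤ y) (h2 : y ≤ (46/25 : ℝ)) :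
    Real.exp (-(y + y^2/2 + 0.1786*y^3)) ≤ 1 - (1.1108 * y - 0.3099 * y^2 - 0.0113) := by
  have hE : Real.exp (-(20755951281/5000000000 : ℝ)) ≤ (78731/5000000 : ℝ) := by
    apply exp_neg_le_of_sum (by norm_num) 15 <;>
      norm_num [Finset.sum_range_succ, Nat.factorial]
  have hd : (0:ℝ) ≤ (y + y^2/2 + 0.1786*y^3) - (20755951281/5000000000 : ℝ) := by nlinarith [h1, hy]
  have hq : Real.exp (-(y + y^2/2 + 0.1786*y^3)) ≤ (78731/5000000 : ℝ) * (1 - ((y + y^2/2 + 0.1786*y^3) - (20755951281/5000000000 : ℝ)) + ((y + y^2/2 + 0.1786*y^3) - (20755951281/5000000000 : ℝ))^2/2) := by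
    have hsplit : -(y + y^2/2 + 0.1786*y^3) = -(20755951281/5000000000 : ℝ) + -((y + y^2/2 + 0.1786*y^3) - (20755951281/5000000000 : ℝ)) := by ring
    rw [hsplit, Real.exp_add]
    exact mul_le_mul hE (exp_neg_le_quad hd) (Real.exp_pos _).le (by norm_num)
  nlinarith [hq, mul_nonneg (by linarith : (0:ℝ) ≤ y - (173/100 : ℝ)) (by linarith : (0:ℝ) ≤ (46/25 : ℝ) - y), sq_nonneg (y - (357/200 : ℝ)), sq_nonneg (y^2 - (127449/40000 : ℝ)), mul_nonneg (mul_nonneg (by linarith : (0:ℝ) ≤ y - (173/100 : ℝ)) (by linarith : (0:ℝ) ≤ (46/25 : ℝ) - y)) (sq_nonneg (y - (357/200 : ℝ))), sq_nonneg (y*y - (357/200 : ℝ)*y), pow_nonneg hy 3]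

lemma aux_iv_10 (y : ℝ) (hy : 0 ≤ y) (h1 : (46/25 : ℝ) ≤ y) (h2 : y ≤ (39/20 : ℝ)) :
    Real.exp (-(y + y^2/2 + 0.1786*y^3)) ≤ 1 - (1.1108 * y - 0.3099 * y^2 - 0.0113) := by
  have hE : Real.exp (-(45365131/9765625 : ℝ)) ≤ (96061/10000000 : ℝ) := by
    apply exp_neg_le_of_sum (by norm_num) 16 <;>
      norm_num [Finset.sum_range_succ, Nat.factorial]
  have hd : (0:ℝ) ≤ (y + y^2/2 + 0.1786*y^3) - (45365131/9765625 : ℝ) := by nlinarith [h1, hy]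
  have hq : Real.exp (-(y + y^2/2 + 0.1786*y^3)) ≤ (96061/10000000 : ℝ) * (1 - ((y + y^2/2 + 0.1786*y^3) - (45365131/9765625 : ℝ)) + ((y + y^2/2 + 0.1786*y^3) - (45365131/9765625 : ℝ))^2/2) := by
    have hsplit : -(y + y^2/2 + 0.1786*y^3) = -(45365131/9765625 : ℝ) + -((y + y^2/2 + 0.1786*y^3) - (45365131/9765625 : ℝ)) := by ring
    rw [hsplit, Real.exp_add]
    exact mul_le_mul hE (exp_neg_le_quad hd) (Real.exp_pos _).le (by norm_num)
  nlinarith [hq, mul_nonneg (by linarith : (0:ℝ) ≤ y - (46/25 : ℝ)) (by linarith : (0:ℝ) ≤ (39/20 : ℝ) - y), sq_nonneg (y - (379/200 : ℝ)), sq_nonneg (y^2 - (143641/40000 : ℝ)), mul_nonneg (mul_nonneg (by linarith : (0:ℝ) ≤ y - (46/25 : ℝ)) (by linarith : (0:ℝ) ≤ (39/20 : ℝ) - y)) (sq_nonneg (y - (379/200 : ℝ))), sq_nonneg (y*y - (379/200 : ℝ)*y), pow_nonneg hy 3]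

lemma aux_iv_11 (y : ℝ) (hy : 0 ≤ y) (h1 : (39/20 : ℝ) ≤ y) (h2 : y ≤ (117/50 : ℝ)) :
    Real.exp (-(y + y^2/2 + 0.1786*y^3)) ≤ 1 - (1.1108 * y - 0.3099 * y^2 - 0.0113) := by
  have hE : Real.exp (-(207021867/40000000 : ℝ)) ≤ (56533/10000000 : ℝ) := by
    apply exp_neg_le_of_sum (by norm_num) 17 <;>
      norm_num [Finset.sum_range_succ, Nat.factorial]
  have h2' : Real.exp (-(y + y^2/2 + 0.1786*y^3)) ≤ Real.exp (-(207021867/40000000 : ℝ)) := by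
    apply Real.exp_le_exp.mpr
    nlinarith [h1, hy]
  have h3 : Real.exp (-(y + y^2/2 + 0.1786*y^3)) ≤ (56533/10000000 : ℝ) := h2'.trans hE
  nlinarith [h3, mul_nonneg (by linarith : (0:ℝ) ≤ y - (39/20 : ℝ)) (by linarith : (0:ℝ) ≤ (117/50 : ℝ) - y)]

lemma aux_iv_12 (y : ℝ) (hy : 0 ≤ y) (h1 : (117/50 : ℝ) ≤ y) (h2 : y ≤ (359/100 : ℝ)) :
    Real.exp (-(y + y^2/2 + 0.1786*y^3)) ≤ 1 - (1.1108 * y - 0.3099 * y^2 - 0.0113) := by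
  have hE : Real.exp (-(4603865409/625000000 : ℝ)) ≤ (6323/10000000 : ℝ) := by
    apply exp_neg_le_of_sum (by norm_num) 21 <;>
      norm_num [Finset.sum_range_succ, Nat.factorial]
  have h2' : Real.exp (-(y + y^2/2 + 0.1786*y^3)) ≤ Real.exp (-(4603865409/625000000 : ℝ)) := by
    apply Real.exp_le_exp.mpr
    nlinarith [h1, hy]
  have h3 : Real.exp (-(y + y^2/2 + 0.1786*y^3)) ≤ (6323/10000000 : ℝ) := h2'.trans hE
  nlinarith [h3, mul_nonneg (by linarith : (0:ℝ) ≤ y - (117/50 : ℝ)) (by linarith : (0:ℝ) ≤ (359/100 : ℝ) - y)]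

/-- Quadratic lower bound on `p(y)` used in Lemma 3.1(b) for `μ > 0.4`. -/
theorem quad_lower_bound_b_large (y : ℝ) (hy : 0 ≤ y) :
    1.1108 * y - 0.3099 * y^2 - 0.0113
      ≤ 1 - Real.exp (-(y + (1/2) * y^2 + ((4 - 2 * Real.sqrt 3) / 3) * y^3)) := by
  have hs : Real.sqrt 3 ≤ 1.7321 := by
    rw [show (1.7321:ℝ) = Real.sqrt (1.7321^2) from (Real.sqrt_sq (by norm_num)).symm]
    exact Real.sqrt_le_sqrt (by norm_num)
  have hmono : Real.exp (-(y + (1/2) * y^2 + ((4 - 2 * Real.sqrt 3) / 3) * y^3))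
      ≤ Real.exp (-(y + y^2/2 + 0.1786*y^3)) := by
    apply Real.exp_le_exp.mpr
    have h3 : (0:ℝ) ≤ y^3 := pow_nonneg hy 3
    nlinarith [mul_le_mul_of_nonneg_right hs h3]
  rcases le_or_gt y 0.01 with hc1 | hc1
  · have h1 : Real.exp (-(y + (1/2) * y^2 + ((4 - 2 * Real.sqrt 3) / 3) * y^3)) ≤ 1 := hmono.trans (by
      apply Real.exp_le_one_iff.mpr
      nlinarith [pow_nonneg hy 3])
    nlinarith [h1, sq_nonneg y]
  rcases le_or_gt 3.59 y with hc2 | hc2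
  · have h1 : Real.exp (-(y + (1/2) * y^2 + ((4 - 2 * Real.sqrt 3) / 3) * y^3)) ≤ 1 := hmono.trans (by
      apply Real.exp_le_one_iff.mpr
      nlinarith [pow_nonneg hy 3])
    nlinarith [h1, mul_nonneg (by linarith : (0:ℝ) ≤ y - 3.59) (by linarith : (0:ℝ) ≤ y - 0.01)]
  rcases le_or_gt y (4/25 : ℝ) with hc | hc1
  · linarith [aux_iv_0 y hy (by linarith) hc, hmono]
  rcases le_or_gt y (21/100 : ℝ) with hc | hc1
  · linarith [aux_iv_1 y hy (by linarith) hc, hmono]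
  rcases le_or_gt y (13/25 : ℝ) with hc | hc1
  · linarith [aux_iv_2 y hy (by linarith) hc, hmono]
  rcases le_or_gt y (87/100 : ℝ) with hc | hc1
  · linarith [aux_iv_3 y hy (by linarith) hc, hmono]
  rcases le_or_gt y (117/100 : ℝ) with hc | hc1
  · linarith [aux_iv_4 y hy (by linarith) hc, hmono]
  rcases le_or_gt y (7/5 : ℝ) with hc | hc1
  · linarith [aux_iv_5 y hy (by linarith) hc, hmono]
  rcases le_or_gt y (77/50 : ℝ) with hc | hc1
  · linarith [aux_iv_6 y hy (by linarith) hc, hmono]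
  rcases le_or_gt y (161/100 : ℝ) with hc | hc1
  · linarith [aux_iv_7 y hy (by linarith) hc, hmono]
  rcases le_or_gt y (173/100 : ℝ) with hc | hc1
  · linarith [aux_iv_8 y hy (by linarith) hc, hmono]
  rcases le_or_gt y (46/25 : ℝ) with hc | hc1
  · linarith [aux_iv_9 y hy (by linarith) hc, hmono]
  rcases le_or_gt y (39/20 : ℝ) with hc | hc1
  · linarith [aux_iv_10 y hy (by linarith) hc, hmono]
  rcases le_or_gt y (117/50 : ℝ) with hc | hc1
  · linarith [aux_iv_11 y hy (by linarith) hc, hmono]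
  rcases le_or_gt y (359/100 : ℝ) with hc | hc1
  · linarith [aux_iv_12 y hy (by linarith) hc, hmono]
  · linarith
end

section
/- For every real y ≥ 0: y − 0.252·y² ≤ 1 − exp(−(y + (1/2)·y² + ((4 − 2√3)/3)·y³)). -/
set_option maxHeartbeats 2000000

open Real

/-- Degree-9 Taylor lower bound for `exp` at nonnegative arguments. -/
lemma taylor9_le_exp {x : ℝ} (hx : 0 ≤ x) :
    1 + x + x^2/2 + x^3/6 + x^4/24 + x^5/120 + x^6/720 + x^7/5040 + x^8/40320 + x^9/362880
      ≤ Real.exp x := by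
  have h := Real.sum_le_exp_of_nonneg hx 10
  rw [Finset.sum_range_succ, Finset.sum_range_succ, Finset.sum_range_succ,
    Finset.sum_range_succ, Finset.sum_range_succ, Finset.sum_range_succ,
    Finset.sum_range_succ, Finset.sum_range_succ, Finset.sum_range_succ,
    Finset.sum_range_succ, Finset.sum_range_zero] at h
  norm_num [Nat.factorial] at h
  linarith

/-- If the degree-9 Taylor polynomial at `C ≥ 0` already exceeds `1/M`,
then `exp (-C) ≤ M`. -/
lemma expneg_le {C M : ℝ} (hC : 0 ≤ C) (hM : 0 < M)
    (hT : 1/M ≤ 1 + C + C^2/2 + C^3/6 + C^4/24 + C^5/120 + C^6/720 + C^7/5040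
      + C^8/40320 + C^9/362880) : Real.exp (-C) ≤ M := by
  have h1 := taylor9_le_exp hC
  have h2 : 1/M ≤ Real.exp C := le_trans hT h1
  have h3 : Real.exp (-C) = 1/Real.exp C := by rw [Real.exp_neg]; ring
  rw [h3]
  rw [div_le_iff₀ (Real.exp_pos C)]
  rw [div_le_iff₀ hM] at h2
  linarith

/-- Key purely-numeric inequality: `exp(-(y + y²/2 + 0.1786 y³)) ≤ 1 - y + 0.252 y²`. -/
lemma key_ineq (y : ℝ) (hy : 0 ≤ y) :
    Real.exp (-(y + y^2/2 + 0.1786 * y^3)) ≤ 1 - y + 0.252 * y^2 := by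
  set h : ℝ := y + y^2/2 + 0.1786 * y^3 with hh
  have hy2 : 0 ≤ y^2 := sq_nonneg y
  have hy3 : 0 ≤ y^3 := by positivity
  have hh0 : 0 ≤ h := by rw [hh]; positivity
  -- helper: monotone step for intervals
  have step : ∀ a b C M : ℝ, a ≤ y → y ≤ b → 0 ≤ a → b ≤ 39/20 → 0 < M →
      C ≤ a + a^2/2 + 0.1786 * a^3 →
      Real.exp (-C) ≤ M →
      M ≤ 1 - b + 0.252 * b^2 →
      Real.exp (-h) ≤ 1 - y + 0.252 * y^2 := by
    intro a b C M hya hyb ha0 hb _hM hCa hE hq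
    have h2 : a^2 ≤ y^2 := by nlinarith
    have h3 : a^3 ≤ y^3 := by nlinarith
    have hCh : C ≤ h := by rw [hh]; nlinarith
    have hmono : Real.exp (-h) ≤ Real.exp (-C) :=
      Real.exp_le_exp.mpr (by linarith)
    have hqy : 1 - b + 0.252 * b^2 ≤ 1 - y + 0.252 * y^2 := by nlinarith
    linarith
  rcases le_or_gt y 1 with h1 | h1
  · -- polynomial region [0,1] via exp x ≥ 1 + x + x²/2
    have hq := Real.quadratic_le_exp_of_nonneg hh0
    have hqpos : (0:ℝ) < 1 + h + h^2/2 := by nlinarith [sq_nonneg h]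
    have hexp : Real.exp (-h) = 1/Real.exp h := by rw [Real.exp_neg]; ring
    have hmain : 1 ≤ (1 - y + 0.252 * y^2) * (1 + h + h^2/2) := by
      rw [hh]
      nlinarith [sq_nonneg y, sq_nonneg (y - 1), sq_nonneg (y*y - y), mul_nonneg hy2 hy,
        mul_nonneg (mul_nonneg hy2 hy2) hy, mul_nonneg hy2 hy2,
        mul_nonneg (mul_nonneg hy2 hy2) hy2, mul_nonneg (mul_nonneg (mul_nonneg hy2 hy2) hy2) hy,
        mul_nonneg (mul_nonneg (mul_nonneg hy2 hy2) hy2) hy2]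
    have hqq : (0:ℝ) < 1 - y + 0.252 * y^2 := by nlinarith [sq_nonneg h]
    rw [hexp, div_le_iff₀ (Real.exp_pos h)]
    calc (1:ℝ) ≤ (1 - y + 0.252 * y^2) * (1 + h + h^2/2) := hmain
      _ ≤ (1 - y + 0.252 * y^2) * Real.exp h := by
          exact mul_le_mul_of_nonneg_left hq (le_of_lt hqq)
  rcases le_or_gt y 1.14 with h2 | h2
  · exact step 1 1.14 (8393/5000) (117187/625000) (by linarith) h2 (by norm_num) (by norm_num)
      (by norm_num) (by norm_num)
      (expneg_le (by norm_num) (by norm_num) (by norm_num)) (by norm_num)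
  rcases le_or_gt y 1.29 with h3 | h3
  · exact step 1.14 1.29 (1284002349/625000000) (323383/2500000) (by linarith) h3 (by norm_num) (by norm_num)
      (by norm_num) (by norm_num)
      (expneg_le (by norm_num) (by norm_num) (by norm_num)) (by norm_num)
  rcases le_or_gt y 1.44 with h4 | h4
  · exact step 1.29 1.44 (12527243277/5000000000) (6449/78125) (by linarith) h4 (by norm_num) (by norm_num)
      (by norm_num) (by norm_num)
      (expneg_le (by norm_num) (by norm_num) (by norm_num)) (by norm_num)
  rcases le_or_gt y 1.51 with h5 | h5
  · exact step 1.44 1.51 (29395476/9765625) (161463/2500000) (by linarith) h5 (by norm_num) (by norm_num)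
      (by norm_num) (by norm_num)
      (expneg_le (by norm_num) (by norm_num) (by norm_num)) (by norm_num)
  rcases le_or_gt y 1.58 with h6 | h6
  · exact step 1.51 1.58 (16324805243/5000000000) (30683/625000) (by linarith) h6 (by norm_num) (by norm_num)
      (by norm_num) (by norm_num)
      (expneg_le (by norm_num) (by norm_num) (by norm_num)) (by norm_num)
  rcases le_or_gt y 1.68 with h7 | h7
  · exact step 1.58 1.68 (2207908827/625000000) (2441/78125) (by linarith) h7 (by norm_num) (by norm_num)
      (by norm_num) (by norm_num)
      (expneg_le (by norm_num) (by norm_num) (by norm_num)) (by norm_num)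
  rcases le_or_gt y 1.75 with h8 | h8
  · exact step 1.68 1.75 (38457573/9765625) (87/4000) (by linarith) h8 (by norm_num) (by norm_num)
      (by norm_num) (by norm_num)
      (expneg_le (by norm_num) (by norm_num) (by norm_num)) (by norm_num)
  rcases le_or_gt y 1.8 with h9 | h9
  · exact step 1.75 1.8 (1356299/320000) (103/6250) (by linarith) h9 (by norm_num) (by norm_num)
      (by norm_num) (by norm_num)
      (expneg_le (by norm_num) (by norm_num) (by norm_num)) (by norm_num)
  rcases le_or_gt y 1.85 with h10 | h10
  · exact step 1.8 1.85 (2788497/625000) (1247/100000) (by linarith) h10 (by norm_num) (by norm_num)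
      (by norm_num) (by norm_num)
      (expneg_le (by norm_num) (by norm_num) (by norm_num)) (by norm_num)
  rcases le_or_gt y 1.9 with h11 | h11
  · exact step 1.85 1.9 (187683129/40000000) (243/25000) (by linarith) h11 (by norm_num) (by norm_num)
      (by norm_num) (by norm_num)
      (expneg_le (by norm_num) (by norm_num) (by norm_num)) (by norm_num)
  · -- y ≥ 1.9 : q(y) ≥ 1/126 always, and exp(-h) ≤ exp(-h(1.9)) ≤ 1/126
    have ha0 : (0:ℝ) ≤ (1.9:ℝ) := by norm_num
    have h2' : (1.9:ℝ)^2 ≤ y^2 := by nlinarith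
    have h3' : (1.9:ℝ)^3 ≤ y^3 := by nlinarith
    have hCh : (4.9300174:ℝ) ≤ h := by rw [hh]; nlinarith
    have hmono : Real.exp (-h) ≤ Real.exp (-(4.9300174:ℝ)) :=
      Real.exp_le_exp.mpr (by linarith)
    have hE : Real.exp (-(4.9300174:ℝ)) ≤ 1/126 :=
      expneg_le (by norm_num) (by norm_num) (by norm_num)
    have hqy : (1:ℝ)/126 ≤ 1 - y + 0.252 * y^2 := by
      nlinarith [sq_nonneg (y - 125/63)]
    linarith

/-- Quadratic lower bound on `p(y)` used in Lemma 3.1(d) for `μ ≤ 0.4`. -/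
theorem quad_lower_bound_d_small (y : ℝ) (hy : 0 ≤ y) :
    y - 0.252 * y^2 ≤ 1 - Real.exp (-(y + (1/2) * y^2 + ((4 - 2 * Real.sqrt 3) / 3) * y^3)) := by
  have hs0 : (0:ℝ) ≤ Real.sqrt 3 := Real.sqrt_nonneg 3
  have hs2 : Real.sqrt 3 ^ 2 = 3 := Real.sq_sqrt (by norm_num)
  have hs : Real.sqrt 3 ≤ 1.7321 := by nlinarith
  have hy3 : 0 ≤ y^3 := by positivity
  have hc : (0.1786:ℝ) * y^3 ≤ ((4 - 2 * Real.sqrt 3) / 3) * y^3 := by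
    apply mul_le_mul_of_nonneg_right _ hy3
    nlinarith
  have hmono : Real.exp (-(y + (1/2) * y^2 + ((4 - 2 * Real.sqrt 3) / 3) * y^3))
      ≤ Real.exp (-(y + y^2/2 + 0.1786 * y^3)) := by
    apply Real.exp_le_exp.mpr
    nlinarith
  have hk := key_ineq y hy
  linarith
end

section
/- For each j ∈ {1, …, n} let T_j be a finite set and P_j : T_j → ℝ a probability mass function with 0 < P_j(s) < 1 for every s ∈ T_j. A set sequence is a tuple S = (S_1, …, S_n) with S_j ⊆ T_j, identified with the set of pairs {(j, s) : s ∈ S_j}; define g(S) = 1 − Π_{j=1}^n (1 − Σ_{s ∈ S_j} P_j(s)). Fix μ ≥ 0 and consider the polytope of vectors z = (z_j(s))_{j ∈ {1,…,n}, s ∈ T_j} satisfying: z_j(s) ≥ 0 for all (j, s); Σ_{(j,s)} z_j(s) = μ; and Σ_{(j,s) ∈ S} z_j(s) ≤ g(S) for every set sequence S. Then for every extreme point z of this polytope, letting Y = {(j, s) : z_j(s) > 0} and m = |Y|, there exist set sequences S̃_1 ⊊ S̃_2 ⊊ ⋯ ⊊ S̃_m such that: |S̃_k \ S̃_{k−1}|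 = 1 for every 1 ≤ k ≤ m (with S̃_0 = ∅); S̃_m = Y; Σ_{(j,s) ∈ S̃_k} z_j(s) = g(S̃_k) for every 1 ≤ k ≤ m − 1; and Σ_{(j,s) ∈ S̃_m} z_j(s) = min(μ, g(S̃_m)). -/
/-!
The coverage function `G(A) = 1 - ∏ⱼ (1 - Pⱼ(Aⱼ))` is monotone and submodular, so the sets on
which an extreme point `z` is tight are closed under union and intersection, and stay tight when
intersected with the support `Y` of `z`. If no tight set separated two points `p ≠ q` of `Y`,
then `z ± ε (e_p - e_q)` would stay in the polytope for small `ε`, contradicting extremality.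
Hence `Y` can be listed so that every proper prefix is tight: a maximal tight set strictly inside
`Y` misses exactly one point of `Y`, since two missed points would be split by a tight set whose
union with it is larger. The last prefix is `Y` itself, where `∑_Y z = μ ≤ G(Y)`.
-/

open Finset Filter Topology

section Chain

variable {E : Type*} [DecidableEq E] {F : Set (Finset E)}

theorem exists_mem_subset_sdiff_eq_singleton (hF0 : ∅ ∈ F)
    (hFunion : ∀ B ∈ F, ∀ D ∈ F, B ∪ D ∈ F) {A : Finset E} (hA : A.Nonempty)
    (hsep : ∀ p ∈ A, ∀ q ∈ A, p ≠ q → ∃ D ∈ F, D ⊆ A ∧ ¬(p ∈ D ↔ q ∈ D)) :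
    ∃ B ∈ F, B ⊆ A ∧ ∃ p, A \ B = {p} := by
  obtain ⟨B, ⟨hBF, hBA⟩, hBmax⟩ : ∃ B, Maximal (· ∈ {B | B ∈ F ∧ B ⊂ A}) B :=
    (A.powerset.finite_toSet.subset fun B hB => mem_powerset.2 hB.2.1).exists_maximal
      ⟨∅, hF0, hA.empty_ssubset⟩
  refine ⟨B, hBF, hBA.1, ?_⟩
  have not_sep : ∀ p ∈ A \ B, ∀ q ∈ A \ B, ∀ D ∈ F, D ⊆ A → p ∈ D → q ∉ D → False := by
    intro p hp q hq D hDF hDA hpD hqD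
    have hBDA : B ∪ D ⊂ A := (ssubset_iff_of_subset (union_subset hBA.1 hDA)).2
      ⟨q, (mem_sdiff.1 hq).1, by simp [(mem_sdiff.1 hq).2, hqD]⟩
    exact (mem_sdiff.1 hp).2 (hBmax ⟨hFunion B hBF D hDF, hBDA⟩ subset_union_left
      (mem_union_right B hpD))
  obtain ⟨p, hp⟩ | ⟨p, hp, q, hq, hpq⟩ :=
    (sdiff_nonempty.2 fun h => hBA.2 h).exists_eq_singleton_or_nontrivial
  · exact ⟨p, hp⟩
  obtain ⟨D, hDF, hDA, hD⟩ := hsep p (mem_sdiff.1 hp).1 q (mem_sdiff.1 hq).1 hpq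
  by_cases hpD : p ∈ D
  · exact (not_sep p hp q hq D hDF hDA hpD fun hqD => hD (iff_of_true hpD hqD)).elim
  · exact (not_sep q hq p hp D hDF hDA (by tauto) hpD).elim

theorem exists_nodup_toFinset_eq_forall_take_mem (hF0 : ∅ ∈ F)
    (hFunion : ∀ B ∈ F, ∀ D ∈ F, B ∪ D ∈ F) (hFinter : ∀ B ∈ F, ∀ D ∈ F, B ∩ D ∈ F)
    (A : Finset E) (hsep : ∀ p ∈ A, ∀ q ∈ A, p ≠ q → ∃ D ∈ F, D ⊆ A ∧ ¬(p ∈ D ↔ q ∈ D)) :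
    ∃ l : List E, l.Nodup ∧ l.toFinset = A ∧ ∀ k < l.length, (l.take k).toFinset ∈ F := by
  induction A using Finset.strongInduction with
  | H A ih =>
  rcases A.eq_empty_or_nonempty with rfl | hA
  · exact ⟨[], List.nodup_nil, rfl, by simp⟩
  obtain ⟨B, hBF, hBA, p, hp⟩ := exists_mem_subset_sdiff_eq_singleton hF0 hFunion hA hsep
  obtain ⟨hpA, hpB⟩ := mem_sdiff.1 (hp ▸ mem_singleton_self p)
  have hBsep : ∀ p ∈ B, ∀ q ∈ B, p ≠ q → ∃ D ∈ F, D ⊆ B ∧ ¬(p ∈ D ↔ q ∈ D) := by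
    intro p hp q hq hpq
    obtain ⟨D, hDF, -, hD⟩ := hsep p (hBA hp) q (hBA hq) hpq
    exact ⟨D ∩ B, hFinter D hDF B hBF, inter_subset_right, by simpa [hp, hq] using hD⟩
  obtain ⟨l, hl, rfl, hlF⟩ := ih _ ((ssubset_iff_of_subset hBA).2 ⟨p, hpA, hpB⟩) hBsep
  refine ⟨l ++ [p], hl.append (List.nodup_singleton p) (by simpa using hpB), ?_, fun k hk => ?_⟩
  · rw [List.toFinset_append, ← union_sdiff_of_subset hBA, hp]
    simp
  · rw [List.length_append, List.length_singleton] at hk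
    rw [List.take_append_of_le_length (Nat.le_of_lt_succ hk)]
    rcases (Nat.le_of_lt_succ hk).lt_or_eq with hk | rfl
    · exact hlF k hk
    · rwa [List.take_length]

theorem toFinset_take_subset_toFinset_take (l : List E) {i j : ℕ} (hij : i ≤ j) :
    (l.take i).toFinset ⊆ (l.take j).toFinset := fun x => by
  simpa only [List.mem_toFinset] using ((List.take_prefix_take_left hij).subset ·)

theorem card_toFinset_take_sdiff {l : List E} (hl : l.Nodup) {k : ℕ} (hk₁ : 1 ≤ k)
    (hk₂ : k ≤ l.length) : ((l.take k).toFinset \ (l.take (k - 1)).toFinset).card = 1 := by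
  have hcard : ∀ i, (l.take i).toFinset.card = min i l.length := fun i => by
    rw [List.toFinset_card_of_nodup (hl.sublist (List.take_sublist i l)), List.length_take]
  rw [card_sdiff_of_subset (toFinset_take_subset_toFinset_take l (Nat.sub_le k 1)), hcard, hcard]
  omega

end Chain

section Polytope

variable {E : Type*}

def polymatroidSlice [Fintype E] (G : Finset E → ℝ) (μ : ℝ) : Set (E → ℝ) :=
  {z | (∀ p, 0 ≤ z p) ∧ ∑ p, z p = μ ∧ ∀ A, ∑ p ∈ A, z p ≤ G A}

def tightSets (G : Finset E → ℝ) (z : E → ℝ) : Set (Finset E) :=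
  {A | ∑ p ∈ A, z p = G A}

theorem eq_zero_of_eventually_add_smul_mem {V : Type*} [AddCommGroup V] [Module ℝ V]
    {C : Set V} {x d : V} (hx : x ∈ Set.extremePoints ℝ C)
    (h : ∀ᶠ t in 𝓝 (0 : ℝ), x + t • d ∈ C) : d = 0 := by
  have hneg : ∀ᶠ t in 𝓝 (0 : ℝ), x + (-t) • d ∈ C :=
    (continuous_neg.tendsto' (0 : ℝ) 0 neg_zero).eventually h
  obtain ⟨t, ⟨hplus, hminus⟩, ht⟩ :=
    (((h.and hneg).filter_mono nhdsWithin_le_nhds).and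
      (self_mem_nhdsWithin : Set.Ioi (0 : ℝ) ∈ 𝓝[>] 0)).exists
  have hmid : x ∈ openSegment ℝ (x + t • d) (x + (-t) • d) :=
    ⟨1 / 2, 1 / 2, by norm_num, by norm_num, by norm_num, by module⟩
  have htd : t • d = 0 := add_eq_left.1 (hx.2 hplus hminus hmid)
  exact (smul_eq_zero.1 htd).resolve_left (ne_of_gt ht)

variable {G : Finset E → ℝ} {z : E → ℝ}

theorem mem_tightSets {A : Finset E} : A ∈ tightSets G z ↔ ∑ p ∈ A, z p = G A := Iff.rfl

theorem eventually_add_smul_mem_polymatroidSlice [Fintype E] {μ : ℝ}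
    (hz : z ∈ polymatroidSlice G μ) {d : E → ℝ}
    (hd : ∑ p, d p = 0) (hdz : ∀ p, d p ≠ 0 → 0 < z p)
    (hdG : ∀ A, ∑ p ∈ A, d p ≠ 0 → ∑ p ∈ A, z p < G A) :
    ∀ᶠ t in 𝓝 (0 : ℝ), z + t • d ∈ polymatroidSlice G μ := by
  obtain ⟨hz0, hzμ, hzG⟩ := hz
  have hlim (a b : ℝ) : Tendsto (fun t : ℝ => a + t * b) (𝓝 0) (𝓝 a) := by
    simpa using ((tendsto_id (x := 𝓝 (0 : ℝ))).mul_const b).const_add a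
  have hnonneg : ∀ᶠ t in 𝓝 (0 : ℝ), ∀ p, 0 ≤ z p + t * d p := by
    refine eventually_all.2 fun p => ?_
    by_cases hdp : d p = 0
    · simp [hdp, hz0 p]
    · exact ((hlim _ _).eventually_const_lt (hdz p hdp)).mono fun t ht => ht.le
  have hle : ∀ᶠ t in 𝓝 (0 : ℝ), ∀ A, ∑ p ∈ A, z p + t * ∑ p ∈ A, d p ≤ G A := by
    refine eventually_all.2 fun A => ?_
    by_cases hdA : ∑ p ∈ A, d p = 0
    · simp [hdA, hzG A]
    · exact ((hlim _ _).eventually_lt_const (hdG A hdA)).mono fun t ht => ht.le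
  filter_upwards [hnonneg, hle] with t ht₁ ht₂
  refine ⟨ht₁, ?_, fun A => ?_⟩ <;>
    simp only [Pi.add_apply, Pi.smul_apply, smul_eq_mul, sum_add_distrib, ← mul_sum]
  · rw [hd, hzμ, mul_zero, add_zero]
  · exact ht₂ A

variable [DecidableEq E]

theorem union_mem_tightSets (hG : ∀ A B, G (A ∪ B) + G (A ∩ B) ≤ G A + G B)
    (hz : ∀ A, ∑ p ∈ A, z p ≤ G A) {A B : Finset E} (hA : A ∈ tightSets G z)
    (hB : B ∈ tightSets G z) : A ∪ B ∈ tightSets G z := by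
  rw [mem_tightSets] at *
  linarith [hz (A ∪ B), hz (A ∩ B), hG A B, sum_union_inter (s₁ := A) (s₂ := B) (f := z)]

theorem inter_mem_tightSets (hG : ∀ A B, G (A ∪ B) + G (A ∩ B) ≤ G A + G B)
    (hz : ∀ A, ∑ p ∈ A, z p ≤ G A) {A B : Finset E} (hA : A ∈ tightSets G z)
    (hB : B ∈ tightSets G z) : A ∩ B ∈ tightSets G z := by
  rw [mem_tightSets] at *
  linarith [hz (A ∪ B), hz (A ∩ B), hG A B, sum_union_inter (s₁ := A) (s₂ := B) (f := z)]

theorem inter_mem_tightSets_of_eq_zero (hG : Monotone G) (hz : ∀ A, ∑ p ∈ A, z p ≤ G A)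
    {Y : Finset E} (hY : ∀ p ∉ Y, z p = 0) {A : Finset E} (hA : A ∈ tightSets G z) :
    A ∩ Y ∈ tightSets G z := by
  have hsum : ∑ p ∈ A ∩ Y, z p = ∑ p ∈ A, z p :=
    sum_subset inter_subset_left fun p hpA hp => hY p fun hpY => hp (mem_inter.2 ⟨hpA, hpY⟩)
  refine le_antisymm (hz _) ?_
  calc G (A ∩ Y) ≤ G A := hG inter_subset_left
    _ = ∑ p ∈ A ∩ Y, z p := by rw [hsum, hA]

variable [Fintype E] {μ : ℝ}

theorem exists_mem_tightSets_not_iff (hz : z ∈ Set.extremePoints ℝ (polymatroidSlice G μ))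
    {p q : E} (hpq : p ≠ q) (hp : 0 < z p) (hq : 0 < z q) :
    ∃ A ∈ tightSets G z, ¬(p ∈ A ↔ q ∈ A) := by
  by_contra! htight
  set d : E → ℝ := Pi.single p 1 - Pi.single q 1
  have hdsum (A : Finset E) :
      ∑ r ∈ A, d r = (if p ∈ A then 1 else 0) - (if q ∈ A then 1 else 0) := by
    simp [d, sum_sub_distrib, sum_pi_single']
  have hdsep (A : Finset E) (hA : ∑ r ∈ A, d r ≠ 0) : ¬(p ∈ A ↔ q ∈ A) := fun h => by
    simp [hdsum, h] at hA
  have hd0 := eq_zero_of_eventually_add_smul_mem hz <|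
    eventually_add_smul_mem_polymatroidSlice hz.1
      (by simp [hdsum])
      (fun r hr => by
        by_cases hrp : r = p
        · exact hrp ▸ hp
        · by_cases hrq : r = q
          · exact hrq ▸ hq
          · simp [d, hrp, hrq] at hr)
      (fun A hA => (hz.1.2.2 A).lt_of_ne fun h => hdsep A hA (htight A h))
  simpa [d, hpq] using congrFun hd0 p

theorem exists_nodup_toFinset_eq_support_forall_take_mem_tightSets (hG0 : G ∅ = 0)
    (hGmono : Monotone G) (hGsub : ∀ A B, G (A ∪ B) + G (A ∩ B) ≤ G A + G B)
    (hz : z ∈ Set.extremePoints ℝ (polymatroidSlice G μ)) :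
    ∃ l : List E, l.Nodup ∧ l.toFinset = univ.filter (fun p => 0 < z p) ∧
      ∀ k < l.length, (l.take k).toFinset ∈ tightSets G z := by
  obtain ⟨hz0, -, hzG⟩ := hz.1
  have hY : ∀ p ∉ univ.filter (fun p => 0 < z p), z p = 0 := fun p hp =>
    le_antisymm (not_lt.1 (by simpa using hp)) (hz0 p)
  refine exists_nodup_toFinset_eq_forall_take_mem (by simp [tightSets, hG0])
    (fun A hA B hB => union_mem_tightSets hGsub hzG hA hB)
    (fun A hA B hB => inter_mem_tightSets hGsub hzG hA hB) _ fun p hp q hq hpq => ?_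
  simp only [mem_filter, mem_univ, true_and] at hp hq
  obtain ⟨D, hD, hsep⟩ := exists_mem_tightSets_not_iff hz hpq hp hq
  exact ⟨_, inter_mem_tightSets_of_eq_zero hGmono hzG hY hD, inter_subset_right,
    by simpa [hp, hq] using hsep⟩

end Polytope

theorem prod_add_prod_le_prod_add_prod {ι : Type*} (s : Finset ι) {u a b c : ι → ℝ}
    (hu : ∀ i ∈ s, 0 ≤ u i) (hua : ∀ i ∈ s, u i ≤ a i) (hub : ∀ i ∈ s, u i ≤ b i)
    (habc : ∀ i ∈ s, a i + b i = u i + c i) :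
    ∏ i ∈ s, a i + ∏ i ∈ s, b i ≤ ∏ i ∈ s, u i + ∏ i ∈ s, c i := by
  induction s using Finset.cons_induction with
  | empty => norm_num
  | cons x s _ ih =>
    simp only [forall_mem_cons] at hu hua hub habc
    have hUA := prod_le_prod hu.2 hua.2
    have hUB := prod_le_prod hu.2 hub.2
    have hc : c x = a x + b x - u x := by linarith [habc.1]
    simp only [prod_cons, hc]
    -- the slack is `(a x - u x) (∏ b - ∏ u) + (b x - u x) (∏ a - ∏ u)` plus `c x` times that of `ih`
    nlinarith [mul_le_mul_of_nonneg_left (ih hu.2 hua.2 hub.2 habc.2)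
        (by linarith [hu.1, hua.1, hub.1] : 0 ≤ a x + b x - u x),
      mul_nonneg (sub_nonneg.2 hua.1) (sub_nonneg.2 hUB),
      mul_nonneg (sub_nonneg.2 hub.1) (sub_nonneg.2 hUA)]

section Coverage

variable {ι : Type*} {α : ι → Type*}

noncomputable def fiber (A : Finset (Σ i, α i)) (i : ι) : Finset (α i) :=
  A.preimage (Sigma.mk i) sigma_mk_injective.injOn

@[simp]
theorem mem_fiber {A : Finset (Σ i, α i)} {i : ι} {a : α i} : a ∈ fiber A i ↔ ⟨i, a⟩ ∈ A :=
  mem_preimage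

@[simp]
theorem fiber_empty (i : ι) : fiber (∅ : Finset (Σ i, α i)) i = ∅ := by
  ext; simp

theorem fiber_mono {A B : Finset (Σ i, α i)} (h : A ⊆ B) (i : ι) : fiber A i ⊆ fiber B i :=
  fun _ ha => mem_fiber.2 (h (mem_fiber.1 ha))

theorem sum_fiber_le_sum_fiber {P : ∀ i, α i → ℝ} (hP : ∀ i a, 0 ≤ P i a)
    {A B : Finset (Σ i, α i)} (h : A ⊆ B) (i : ι) :
    ∑ a ∈ fiber A i, P i a ≤ ∑ a ∈ fiber B i, P i a :=
  sum_le_sum_of_subset_of_nonneg (fiber_mono h i) fun a _ _ => hP i a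

theorem sum_fiber_le_one [∀ i, Fintype (α i)] {P : ∀ i, α i → ℝ} (hP : ∀ i a, 0 ≤ P i a)
    (hP1 : ∀ i, ∑ a, P i a ≤ 1) (A : Finset (Σ i, α i)) (i : ι) :
    ∑ a ∈ fiber A i, P i a ≤ 1 :=
  (sum_le_sum_of_subset_of_nonneg (subset_univ _) fun a _ _ => hP i a).trans (hP1 i)

section DecidableEq

variable [DecidableEq ι] [∀ i, DecidableEq (α i)]

theorem fiber_union (A B : Finset (Σ i, α i)) (i : ι) :
    fiber (A ∪ B) i = fiber A i ∪ fiber B i := by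
  ext; simp

theorem fiber_inter (A B : Finset (Σ i, α i)) (i : ι) :
    fiber (A ∩ B) i = fiber A i ∩ fiber B i := by
  ext; simp

theorem fiber_sdiff (A B : Finset (Σ i, α i)) (i : ι) :
    fiber (A \ B) i = fiber A i \ fiber B i := by
  ext; simp

end DecidableEq

variable [Fintype ι]

theorem univ_sigma_fiber (A : Finset (Σ i, α i)) : univ.sigma (fiber A) = A := by
  ext ⟨i, a⟩; simp

theorem fiber_univ_sigma (S : ∀ i, Finset (α i)) : fiber (univ.sigma S) = S := by
  funext i; ext; simp

theorem sum_fiber (A : Finset (Σ i, α i)) (w : (Σ i, α i) → ℝ) :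
    ∑ i, ∑ a ∈ fiber A i, w ⟨i, a⟩ = ∑ x ∈ A, w x := by
  rw [← sum_sigma, univ_sigma_fiber]

theorem sum_card_fiber (A : Finset (Σ i, α i)) : ∑ i, (fiber A i).card = A.card := by
  rw [← card_sigma, univ_sigma_fiber]

theorem forall_sum_le_iff_forall_sum_fiber_le (w : (Σ i, α i) → ℝ)
    (g : (∀ i, Finset (α i)) → ℝ) :
    (∀ S, ∑ i, ∑ a ∈ S i, w ⟨i, a⟩ ≤ g S) ↔ ∀ A, ∑ x ∈ A, w x ≤ g (fiber A) := by
  refine ⟨fun h A => ?_, fun h S => ?_⟩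
  · simpa only [sum_fiber] using h (fiber A)
  · simpa only [sum_sigma, fiber_univ_sigma] using h (univ.sigma S)

noncomputable def coverage (P : ∀ i, α i → ℝ) (A : Finset (Σ i, α i)) : ℝ :=
  1 - ∏ i, (1 - ∑ a ∈ fiber A i, P i a)

variable {P : ∀ i, α i → ℝ}

@[simp]
theorem coverage_empty : coverage P (∅ : Finset (Σ i, α i)) = 0 := by
  simp [coverage]

variable [∀ i, Fintype (α i)]

theorem coverage_mono (hP : ∀ i a, 0 ≤ P i a) (hP1 : ∀ i, ∑ a, P i a ≤ 1) :
    Monotone (coverage P) := fun A B h => by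
  refine sub_le_sub_left (prod_le_prod (fun i _ => ?_) fun i _ => ?_) 1
  · linarith [sum_fiber_le_one hP hP1 B i]
  · linarith [sum_fiber_le_sum_fiber hP h i]

theorem coverage_union_add_inter_le [DecidableEq ι] [∀ i, DecidableEq (α i)]
    (hP : ∀ i a, 0 ≤ P i a) (hP1 : ∀ i, ∑ a, P i a ≤ 1) (A B : Finset (Σ i, α i)) :
    coverage P (A ∪ B) + coverage P (A ∩ B) ≤ coverage P A + coverage P B := by
  have := prod_add_prod_le_prod_add_prod univ
    (u := fun i => 1 - ∑ a ∈ fiber (A ∪ B) i, P i a)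
    (a := fun i => 1 - ∑ a ∈ fiber A i, P i a) (b := fun i => 1 - ∑ a ∈ fiber B i, P i a)
    (c := fun i => 1 - ∑ a ∈ fiber (A ∩ B) i, P i a)
    (fun i _ => by linarith [sum_fiber_le_one hP hP1 (A ∪ B) i])
    (fun i _ => by linarith [sum_fiber_le_sum_fiber hP (subset_union_left : A ⊆ A ∪ B) i])
    (fun i _ => by linarith [sum_fiber_le_sum_fiber hP (subset_union_right : B ⊆ A ∪ B) i])
    (fun i _ => by
      linarith [fiber_union A B i ▸ fiber_inter A B i ▸
        sum_union_inter (s₁ := fiber A i) (s₂ := fiber B i) (f := P i)])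
  simp only [coverage]
  linarith

end Coverage

theorem extreme_points_of_selection_polytope_general
    (n : ℕ) (T : Fin n → Type*) [∀ j, Fintype (T j)] [∀ j, DecidableEq (T j)]
    (Pm : ∀ j, T j → ℝ) (hP0 : ∀ j s, 0 < Pm j s)
    (hPsum : ∀ j, ∑ s, Pm j s = 1)
    (g : (∀ j, Finset (T j)) → ℝ)
    (hg : ∀ S, g S = 1 - ∏ j, (1 - ∑ s ∈ S j, Pm j s))
    (μ : ℝ)
    (C : Set ((Σ j, T j) → ℝ))
    (hC : C = {z | (∀ p, 0 ≤ z p) ∧ (∑ p, z p = μ) ∧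
      ∀ S : ∀ j, Finset (T j), ∑ j, ∑ s ∈ S j, z ⟨j, s⟩ ≤ g S})
    (z : (Σ j, T j) → ℝ) (hz : z ∈ Set.extremePoints ℝ C) :
    ∃ (m : ℕ) (St : ℕ → ∀ j, Finset (T j)),
      m = (Finset.univ.filter (fun p : Σ j, T j => 0 < z p)).card ∧
      (∀ j, St 0 j = (∅ : Finset (T j))) ∧
      (∀ k, 1 ≤ k → k ≤ m → ∀ j, St (k - 1) j ⊆ St k j) ∧
      (∀ k, 1 ≤ k → k ≤ m → ∑ j, (St k j \ St (k - 1) j).card = 1) ∧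
      (∀ j (s : T j), s ∈ St m j ↔ 0 < z ⟨j, s⟩) ∧
      (∀ k, 1 ≤ k → k ≤ m - 1 → ∑ j, ∑ s ∈ St k j, z ⟨j, s⟩ = g (St k)) ∧
      (∑ j, ∑ s ∈ St m j, z ⟨j, s⟩ = min μ (g (St m))) := by
  have hCG : C = polymatroidSlice (coverage Pm) μ := by
    rw [hC, ← show (fun A => g (fiber A)) = coverage Pm from funext fun A => hg (fiber A)]
    simp only [polymatroidSlice, forall_sum_le_iff_forall_sum_fiber_le]
  rw [hCG] at hz
  have hP : ∀ j s, 0 ≤ Pm j s := fun j s => (hP0 j s).le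
  have hP1 : ∀ j, ∑ s, Pm j s ≤ 1 := fun j => (hPsum j).le
  obtain ⟨l, hl, hlY, hlT⟩ := exists_nodup_toFinset_eq_support_forall_take_mem_tightSets
    coverage_empty (coverage_mono hP hP1) (coverage_union_add_inter_le hP hP1) hz
  obtain ⟨hz0, hzμ, hzG⟩ := hz.1
  have hYμ : ∑ p ∈ univ.filter (fun p => 0 < z p), z p = μ :=
    (sum_filter_of_ne fun p _ hp => (hz0 p).lt_of_ne' hp).trans hzμ
  refine ⟨l.length, fun k => fiber (l.take k).toFinset,
    by rw [← hlY, List.toFinset_card_of_nodup hl], fun j => by simp,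
    fun k _ _ => fiber_mono (toFinset_take_subset_toFinset_take l (Nat.sub_le k 1)),
    fun k hk₁ hk₂ => ?_, fun j s => ?_, fun k hk₁ hk₂ => ?_, ?_⟩
  · simp only [← fiber_sdiff, sum_card_fiber]
    exact card_toFinset_take_sdiff hl hk₁ hk₂
  · simp [hlY]
  · rw [sum_fiber, hg]
    exact hlT k (by omega)
  · dsimp only
    rw [List.take_length, hlY, sum_fiber, hYμ, hg]
    exact (min_eq_left (hYμ ▸ hzG _)).symm

/-- Lemma 6.6 (adapted from Gamlath et al.): structure of the extreme points of the
selection-rule polytope. With `g(S) = 1 − Π_j (1 − Σ_{s ∈ S_j} P_j(s))` and the polytope of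
nonnegative vectors `z` with `Σ z = μ` and `Σ_{(j,s) ∈ S} z_j(s) ≤ g(S)` for all set
sequences `S`, every extreme point `z` with support `Y` of size `m` admits an increasing
chain `S̃_1 ⊊ ⋯ ⊊ S̃_m` of set sequences, each adding exactly one pair, ending at `Y`,
whose constraints are tight (the last one tight at `min(μ, g(S̃_m))`). -/
theorem extreme_points_of_selection_polytope
    (n : ℕ) (T : Fin n → Type*) [∀ j, Fintype (T j)] [∀ j, DecidableEq (T j)]
    (Pm : ∀ j, T j → ℝ) (hP0 : ∀ j s, 0 < Pm j s) (hP1 : ∀ j s, Pm j s < 1)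
    (hPsum : ∀ j, ∑ s, Pm j s = 1)
    (g : (∀ j, Finset (T j)) → ℝ)
    (hg : ∀ S, g S = 1 - ∏ j, (1 - ∑ s ∈ S j, Pm j s))
    (μ : ℝ) (hμ : 0 ≤ μ)
    (C : Set ((Σ j, T j) → ℝ))
    (hC : C = {z | (∀ p, 0 ≤ z p) ∧ (∑ p, z p = μ) ∧
      ∀ S : ∀ j, Finset (T j), ∑ j, ∑ s ∈ S j, z ⟨j, s⟩ ≤ g S})
    (z : (Σ j, T j) → ℝ) (hz : z ∈ Set.extremePoints ℝ C) :
    ∃ (m : ℕ) (St : ℕ → ∀ j, Finset (T j)),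
      m = (Finset.univ.filter (fun p : Σ j, T j => 0 < z p)).card ∧
      (∀ j, St 0 j = (∅ : Finset (T j))) ∧
      (∀ k, 1 ≤ k → k ≤ m → ∀ j, St (k - 1) j ⊆ St k j) ∧
      (∀ k, 1 ≤ k → k ≤ m → ∑ j, (St k j \ St (k - 1) j).card = 1) ∧
      (∀ j (s : T j), s ∈ St m j ↔ 0 < z ⟨j, s⟩) ∧
      (∀ k, 1 ≤ k → k ≤ m - 1 → ∑ j, ∑ s ∈ St k j, z ⟨j, s⟩ = g (St k)) ∧
      (∑ j, ∑ s ∈ St m j, z ⟨j, s⟩ = min μ (g (St m))) :=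
  extreme_points_of_selection_polytope_general n T Pm hP0 hPsum g hg μ C hC z hz
end
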